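/- arXiv:2306.11677 — 7 statements merged into one kernel-verified Lean document; each statement's English description precedes it below -/
import Mathlib

section
/- For pure states, the squared robustness of imaginarity equals 1 - |⟨ψ|ψ*⟩|²: if ρ = |ψ⟩⟨ψ| is a pure state, then (½‖ρ - ρᵀ‖₁)² = 1 - |⟨ψ|ψ*⟩|². -/
/-!
Write `P = |ψ⟩⟨ψ| = ρ` and `Q = |ψ*⟩⟨ψ*| = ρᵀ`, two rank-one projections, and `c = ⟨ψ|ψ*⟩`.
Then `PQP = |c|² P` and `QPQ = |c|² Q`, from which `A = P - Q` satisfies `A² P = (1 - |c|²) P`,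
`A² Q = (1 - |c|²) Q`, hence `A⁴ = (1 - |c|²) A²`, and `tr A² = 2 (1 - |c|²)`.
Since `A` is Hermitian, `√(A Aᴴ) = √(A²) = A² / √(1 - |c|²)`, so `‖A‖₁ = 2 √(1 - |c|²)`
(when `|c| = 1`, `A⁴ = 0` forces `A² = 0` and both sides vanish).
-/

open Matrix
open scoped ComplexOrder

/-- Trace norm of a complex square matrix: `‖A‖₁ = tr √(A Aᴴ)`. -/
noncomputable def traceNorm {d : ℕ} (A : Matrix (Fin d) (Fin d) ℂ) : ℝ :=
  (((Matrix.posSemidef_self_mul_conjTranspose A).isHermitian.eigenvectorUnitary : Matrix (Fin d) (Fin d) ℂ) *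
      diagonal (fun i => ((Real.sqrt (((Matrix.posSemidef_self_mul_conjTranspose A).isHermitian.eigenvalues) i) : ℝ) : ℂ)) *
      (star (Matrix.posSemidef_self_mul_conjTranspose A).isHermitian.eigenvectorUnitary :
        Matrix (Fin d) (Fin d) ℂ)).trace.re

theorem IsIdempotentElem.sub_sq {A : Type*} [Ring A] {P Q : A} (hP : IsIdempotentElem P)
    (hQ : IsIdempotentElem Q) : (P - Q) ^ 2 = P + Q - P * Q - Q * P := by
  rw [sq, sub_mul, mul_sub, mul_sub, hP.eq, hQ.eq]
  abel

theorem IsIdempotentElem.sub_sq_mul_sub_sq {R A : Type*} [CommRing R] [Ring A] [Algebra R A]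
    {P Q : A} {t : R} (hP : IsIdempotentElem P) (hQ : IsIdempotentElem Q)
    (hPQP : P * Q * P = t • P) (hQPQ : Q * P * Q = t • Q) :
    (P - Q) ^ 2 * (P - Q) ^ 2 = (1 - t) • (P - Q) ^ 2 := by
  have hsq := hP.sub_sq hQ
  have hmulP : (P - Q) ^ 2 * P = (1 - t) • P := by
    rw [hsq, sub_smul, one_smul, ← hPQP]
    simp only [sub_mul, add_mul, mul_assoc, hP.eq]
    abel
  have hmulQ : (P - Q) ^ 2 * Q = (1 - t) • Q := by
    rw [hsq, sub_smul, one_smul, ← hQPQ]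
    simp only [sub_mul, add_mul, mul_assoc, hQ.eq]
    abel
  calc (P - Q) ^ 2 * (P - Q) ^ 2
      = (P - Q) ^ 2 * P + (P - Q) ^ 2 * Q - (P - Q) ^ 2 * P * Q - (P - Q) ^ 2 * Q * P := by
        rw [hsq]; simp only [mul_add, mul_sub, mul_assoc]
    _ = (1 - t) • (P - Q) ^ 2 := by
        rw [hmulP, hmulQ, hsq, smul_mul_assoc, smul_mul_assoc]
        simp only [smul_sub, smul_add]

namespace Matrix

variable {n 𝕜 : Type*} [Fintype n] [RCLike 𝕜]

theorem isIdempotentElem_vecMulVec_star {u : n → 𝕜} (hu : star u ⬝ᵥ u = 1) :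
    IsIdempotentElem (vecMulVec u (star u)) := by
  rw [IsIdempotentElem, vecMulVec_mul_vecMulVec, hu, one_smul]

theorem vecMulVec_star_mul_vecMulVec_star_mul_vecMulVec_star (u v : n → 𝕜) :
    vecMulVec u (star u) * vecMulVec v (star v) * vecMulVec u (star u)
      = (‖star u ⬝ᵥ v‖ : 𝕜) ^ 2 • vecMulVec u (star u) := by
  rw [vecMulVec_mul_vecMulVec, vecMulVec_mul_vecMulVec, smul_dotProduct, star_dotProduct v u,
    smul_eq_mul, RCLike.star_def, RCLike.mul_conj, vecMulVec_smul]

theorem trace_sub_sq_of_isIdempotentElem [DecidableEq n] {R : Type*} [CommRing R]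
    {P Q : Matrix n n R} {t : R} (hP : IsIdempotentElem P) (hQ : IsIdempotentElem Q) (hPQP : P * Q * P = t • P) :
    trace ((P - Q) ^ 2) = trace P + trace Q - 2 * t * trace P := by
  have hPQ : trace (P * Q) = t * trace P := by
    rw [← smul_eq_mul (a := t), ← trace_smul, ← hPQP, trace_mul_comm (P * Q) P, ← mul_assoc,
      hP.eq]
  rw [hP.sub_sq hQ, trace_sub, trace_sub, trace_add, trace_mul_comm Q P, hPQ]
  ring

theorem vecMulVec_star_sub_vecMulVec_star_sq_mul_self [DecidableEq n] {u v : n → 𝕜}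
    (hu : star u ⬝ᵥ u = 1) (hv : star v ⬝ᵥ v = 1) :
    (vecMulVec u (star u) - vecMulVec v (star v)) ^ 2 *
        (vecMulVec u (star u) - vecMulVec v (star v)) ^ 2 =      (1 - ‖star u ⬝ᵥ v‖ ^ 2 : ℝ) • (vecMulVec u (star u) - vecMulVec v (star v)) ^ 2 := by
  have hvu : ‖star v ⬝ᵥ u‖ = ‖star u ⬝ᵥ v‖ := by rw [star_dotProduct, norm_star]
  rw [RCLike.real_smul_eq_coe_smul (K := 𝕜)]
  push_cast
  refine (isIdempotentElem_vecMulVec_star hu).sub_sq_mul_sub_sq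
    (isIdempotentElem_vecMulVec_star hv) (vecMulVec_star_mul_vecMulVec_star_mul_vecMulVec_star u v) ?_
  rw [vecMulVec_star_mul_vecMulVec_star_mul_vecMulVec_star, hvu]

theorem trace_vecMulVec_star_sub_vecMulVec_star_sq [DecidableEq n] {u v : n → 𝕜}
    (hu : star u ⬝ᵥ u = 1) (hv : star v ⬝ᵥ v = 1) :
    trace ((vecMulVec u (star u) - vecMulVec v (star v)) ^ 2) =
      ((2 * (1 - ‖star u ⬝ᵥ v‖ ^ 2) : ℝ) : 𝕜) := by
  have htrace {w : n → 𝕜} (hw : star w ⬝ᵥ w = 1) : trace (vecMulVec w (star w)) = 1 := by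
    rw [trace_vecMulVec, dotProduct_comm, hw]
  rw [trace_sub_sq_of_isIdempotentElem (isIdempotentElem_vecMulVec_star hu)
    (isIdempotentElem_vecMulVec_star hv) (vecMulVec_star_mul_vecMulVec_star_mul_vecMulVec_star u v),
    htrace hu, htrace hv]
  push_cast
  ring

open scoped MatrixOrder in
theorem PosSemidef.sqrt_eq_of_mul_self_eq_smul [DecidableEq n] {M : Matrix n n 𝕜}
    (hM : M.PosSemidef) {s : ℝ} (hs : 0 ≤ s) (h : M * M = s • M) :
    CFC.sqrt M = (√s)⁻¹ • M := by
  rcases hs.eq_or_lt with rfl | hs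
  -- for `s = 0` the right-hand side is `0⁻¹ • M = 0`, correct because `M * M = 0` forces `M = 0`
  · have hM0 : M = 0 := by
      rw [← CFC.sqrt_mul_self M hM.nonneg, h, zero_smul, CFC.sqrt_zero]
    simp [hM0]
  · refine CFC.sqrt_unique ?_ (hM.smul (inv_nonneg.mpr (Real.sqrt_nonneg s))).nonneg
    rw [smul_mul_smul, h, smul_smul, ← sq, inv_pow, Real.sq_sqrt hs.le,
      inv_mul_cancel₀ hs.ne', one_smul]

end Matrix

open scoped MatrixOrder in
theorem traceNorm_eq_re_trace_sqrt {d : ℕ} (A : Matrix (Fin d) (Fin d) ℂ) :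
    traceNorm A = (CFC.sqrt (A * Aᴴ)).trace.re := by
  have hA := posSemidef_self_mul_conjTranspose A
  rw [traceNorm, CFC.sqrt_eq_cfc, cfc_nnreal_eq_real _ _ hA.nonneg, hA.1.cfc_eq]
  simp only [IsHermitian.cfc, Real.coe_sqrt, Real.coe_toNNReal', Unitary.conjStarAlgAut_apply]
  congr 5
  funext i
  simp [max_eq_left (hA.eigenvalues_nonneg i)]

/-- For a pure state `ρ = |ψ⟩⟨ψ|`, the squared robustness of imaginarity
`(½‖ρ - ρᵀ‖₁)²` equals `1 - |⟨ψ|ψ*⟩|²`. -/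
theorem robustness_imaginarity_pure (d : ℕ) (ψ : Fin d → ℂ)
    (hψ : ∑ k, ‖ψ k‖ ^ 2 = 1) :
    (traceNorm ((Matrix.of fun i j => ψ i * starRingEnd ℂ (ψ j)) -
        (Matrix.of fun i j => ψ i * starRingEnd ℂ (ψ j))ᵀ) / 2) ^ 2
      = 1 - ‖∑ k, starRingEnd ℂ (ψ k) * starRingEnd ℂ (ψ k)‖ ^ 2 := by
  set A := (Matrix.of fun i j => ψ i * starRingEnd ℂ (ψ j)) -
    (Matrix.of fun i j => ψ i * starRingEnd ℂ (ψ j))ᵀ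
  set s := 1 - ‖star ψ ⬝ᵥ star ψ‖ ^ 2
  have hψ_unit : star ψ ⬝ᵥ ψ = 1 := by
    simp only [dotProduct, Pi.star_apply, Complex.star_def, Complex.conj_mul']
    exact_mod_cast hψ
  have hψ_conj_unit : star (star ψ) ⬝ᵥ star ψ = 1 := by
    rw [star_star, dotProduct_comm, hψ_unit]
  have hA : A = vecMulVec ψ (star ψ) - vecMulVec (star ψ) (star (star ψ)) := by
    rw [star_star]
    ext i j
    simp [A, vecMulVec_apply, mul_comm]
  have hAA : A * Aᴴ = A ^ 2 := by
    rw [sq, hA, conjTranspose_sub, conjTranspose_vecMulVec, conjTranspose_vecMulVec, star_star]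
  have hpsd : (A ^ 2).PosSemidef := hAA ▸ posSemidef_self_mul_conjTranspose A
  have hsq : A ^ 2 * A ^ 2 = s • A ^ 2 := by
    rw [hA, vecMulVec_star_sub_vecMulVec_star_sq_mul_self hψ_unit hψ_conj_unit]
  have htr : trace (A ^ 2) = ((2 * s : ℝ) : ℂ) := by
    rw [hA]
    exact trace_vecMulVec_star_sub_vecMulVec_star_sq hψ_unit hψ_conj_unit
  have hs : 0 ≤ s := by
    have := hpsd.trace_nonneg
    rw [htr, Complex.zero_le_real] at this
    linarith
  rw [traceNorm_eq_re_trace_sqrt, hAA, hpsd.sqrt_eq_of_mul_self_eq_smul hs hsq, trace_smul, htr,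
    Complex.real_smul, ← Complex.ofReal_mul, Complex.ofReal_re,
    show (√s)⁻¹ * (2 * s) / 2 = s / √s by ring, Real.div_sqrt, Real.sq_sqrt hs]
  rfl
end

section
/- The average imaginarity of Haar-random pure states is 1 - 2/(d+1): for the Haar measure η on U(ℂ^d) with d ≥ 1, ∫ [1 - |⟨ψ_U|ψ_U*⟩|²] dη(U) = 1 - 2/(d+1), where ψ_U = U|0⟩. -/
open Matrix MeasureTheory

noncomputable instance matrixMeasurableSpace (d : ℕ) : MeasurableSpace (Matrix (Fin d) (Fin d) ℂ) :=
  MeasurableSpace.pi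

/-!
Write `x = U|0⟩` and `S = ∑ₖ xₖ²`, so the imaginarity is `1 - |S|²`. Only the invariance of the
law of `x` under unitaries is used. Multiplying the coordinate `xₖ` by `i` changes `S` into
`S - 2xₖ²`, and comparing `|S|²` before and after gives `E|S|² = ∑ₖ E|xₖ|⁴`. A unitary which
mixes two coordinates `a ≠ b` with weights of modulus `1/√2` gives `E|x_a|⁴ = 2 E|x_a|²|x_b|²`.
Finally `(∑ₖ |xₖ|²)² = 1`, so `1 = ∑_{j,k} E|x_j|²|x_k|² = d (d + 1)/2 · E|x_a|⁴`, whence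
`E|S|² = d E|x_a|⁴ = 2/(d + 1)`.
-/

open ComplexConjugate

namespace Matrix

variable {n : Type*} [Fintype n] [DecidableEq n]

theorem diagonal_mem_unitaryGroup {R : Type*} [CommRing R] [StarRing R] {w : n → R}
    (hw : ∀ k, star (w k) * w k = 1) : diagonal w ∈ unitaryGroup n R := by
  rw [mem_unitaryGroup_iff', star_eq_conjTranspose, diagonal_conjTranspose,
    diagonal_mul_diagonal, ← diagonal_one]
  exact congrArg diagonal (funext hw)

theorem permMatrix_mem_unitaryGroup {R : Type*} [CommRing R] [StarRing R] (σ : Equiv.Perm n) :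
    σ.permMatrix R ∈ unitaryGroup n R := by
  rw [mem_unitaryGroup_iff', star_eq_conjTranspose, conjTranspose_permMatrix, ← permMatrix_mul,
    mul_inv_cancel, permMatrix_one]

theorem smul_one_add_smul_mem_unitaryGroup {R : Type*} [CommRing R] [StarRing R]
    {P : Matrix n n R} (hP : P ∈ unitaryGroup n R) (hPs : star P = P) {α β : R}
    (h₁ : star α * α + star β * β = 1) (h₂ : star α * β + star β * α = 0) :
    α • 1 + β • P ∈ unitaryGroup n R := by
  have hPP : P * P = 1 := by rw [← mem_unitaryGroup_iff'.mp hP, hPs]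
  rw [mem_unitaryGroup_iff', star_add, star_smul, star_smul, star_one, hPs]
  calc (star α • 1 + star β • P) * (α • 1 + β • P)
      = (star α * α + star β * β) • 1 + (star α * β + star β * α) • P := by
        simp only [add_mul, mul_add, smul_mul_smul, one_mul, mul_one, hPP]; module
    _ = 1 := by rw [h₁, h₂, one_smul, zero_smul, add_zero]

theorem sum_norm_sq_apply_eq_one {U : Matrix n n ℂ} (hU : U ∈ unitaryGroup n ℂ) (i : n) :
    ∑ k, ‖U k i‖ ^ 2 = 1 := by
  have h := congrFun₂ (mem_unitaryGroup_iff'.mp hU) i i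
  simp only [mul_apply, star_apply, one_apply_eq, Complex.star_def, Complex.conj_mul'] at h
  exact_mod_cast h

theorem diagonal_update_one_mulVec {R : Type*} [CommRing R] (p : n) (c : R) (x : n → R) :
    diagonal (Function.update 1 p c) *ᵥ x = Function.update x p (c * x p) := by
  ext k
  rw [mulVec_diagonal]
  rcases eq_or_ne k p with rfl | hk
  · simp
  · simp [hk]

/-- A square root of the transposition matrix of `a` and `b`. Its entries `(1 ± i)/2` have
modulus `1/√2`, as a Hadamard matrix would, without any square root being taken. -/
noncomputable def sqrtSwapMatrix (a b : n) : Matrix n n ℂ :=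
  ((1 + Complex.I) / 2) • 1 + ((1 - Complex.I) / 2) • (Equiv.swap a b).permMatrix ℂ

theorem sqrtSwapMatrix_mem_unitaryGroup (a b : n) : sqrtSwapMatrix a b ∈ unitaryGroup n ℂ := by
  refine smul_one_add_smul_mem_unitaryGroup (permMatrix_mem_unitaryGroup _) ?_ ?_ ?_
  · rw [star_eq_conjTranspose, conjTranspose_permMatrix, Equiv.swap_inv]
  all_goals norm_num [Complex.ext_iff]

theorem sqrtSwapMatrix_mulVec_apply_left (a b : n) (x : n → ℂ) :
    (sqrtSwapMatrix a b *ᵥ x) a = (1 + Complex.I) / 2 * x a + (1 - Complex.I) / 2 * x b := by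
  simp [sqrtSwapMatrix, add_mulVec, smul_mulVec, permMatrix_mulVec]

end Matrix

namespace MeasureTheory.MeasurePreserving

variable {α E : Type*} [MeasurableSpace α] [NormedAddCommGroup E] [NormedSpace ℝ E]
  {ν : Measure α} {φ : α → α}

theorem integral_comp_self (hφ : MeasurePreserving φ ν ν) {f : α → E}
    (hf : AEStronglyMeasurable f ν) : ∫ x, f (φ x) ∂ν = ∫ x, f x ∂ν := by
  rw [← integral_map hφ.measurable.aemeasurable (by rwa [hφ.map_eq]), hφ.map_eq]

theorem integral_eq_zero_of_comp_eq_neg (hφ : MeasurePreserving φ ν ν) {f : α → ℝ}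
    (hf : AEStronglyMeasurable f ν) (hodd : ∀ x, f (φ x) = -f x) : ∫ x, f x ∂ν = 0 := by
  have h := hφ.integral_comp_self hf
  simp only [hodd, integral_neg] at h
  linarith

end MeasureTheory.MeasurePreserving

section UnitSphere

variable {n : Type*} [Fintype n] {ν : Measure (n → ℂ)}

theorem integrable_of_ae_sum_norm_sq_eq_one {E : Type*} [NormedAddCommGroup E] [IsFiniteMeasure ν]
    (hsphere : ∀ᵐ x ∂ν, ∑ k, ‖x k‖ ^ 2 = 1) {f : (n → ℂ) → E} (hf : Continuous f) :
    Integrable f ν := by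
  obtain ⟨C, hC⟩ :=
    (isCompact_closedBall (0 : n → ℂ) 1).exists_bound_of_continuousOn hf.continuousOn
  refine .of_bound hf.aestronglyMeasurable C ?_
  filter_upwards [hsphere] with x hx
  refine hC x (mem_closedBall_zero_iff.2 ((pi_norm_le_iff_of_nonneg zero_le_one).2 fun k => ?_))
  have hk : ‖x k‖ ^ 2 ≤ 1 :=
    hx ▸ Finset.single_le_sum (fun j _ => sq_nonneg ‖x j‖) (Finset.mem_univ k)
  exact (sq_le_one_iff₀ (norm_nonneg _)).1 hk

theorem sum_sum_integral_norm_sq_mul_norm_sq [IsProbabilityMeasure ν]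
    (hsphere : ∀ᵐ x ∂ν, ∑ k, ‖x k‖ ^ 2 = 1) :
    ∑ j, ∑ k, ∫ x, ‖x j‖ ^ 2 * ‖x k‖ ^ 2 ∂ν = 1 := by
  have hint {f : (n → ℂ) → ℝ} (hf : Continuous f) : Integrable f ν :=
    integrable_of_ae_sum_norm_sq_eq_one hsphere hf
  calc ∑ j, ∑ k, ∫ x, ‖x j‖ ^ 2 * ‖x k‖ ^ 2 ∂ν
      = ∫ x, ∑ j, ∑ k, ‖x j‖ ^ 2 * ‖x k‖ ^ 2 ∂ν := by
        rw [integral_finsetSum _ fun j _ => hint (by fun_prop)]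
        exact Finset.sum_congr rfl fun j _ =>
          (integral_finsetSum _ fun k _ => hint (by fun_prop)).symm
    _ = ∫ _, (1 : ℝ) ∂ν := integral_congr_ae (hsphere.mono fun x hx => by
        simp only [← Finset.sum_mul_sum, hx, one_mul])
    _ = 1 := by simp

end UnitSphere

variable {n : Type*} [Fintype n] [DecidableEq n]

def IsUnitarilyInvariant (ν : Measure (n → ℂ)) : Prop :=
  ∀ V ∈ unitaryGroup n ℂ, MeasurePreserving (V *ᵥ ·) ν ν

namespace IsUnitarilyInvariant

variable {ν : Measure (n → ℂ)} (hν : IsUnitarilyInvariant ν)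
include hν

theorem measurePreserving_update_mul (p : n) {c : ℂ} (hc : ‖c‖ = 1) :
    MeasurePreserving (fun x => Function.update x p (c * x p)) ν ν := by
  refine funext (diagonal_update_one_mulVec p c) ▸ hν _ (diagonal_mem_unitaryGroup fun k => ?_)
  rcases eq_or_ne k p with rfl | hk
  · simp [Complex.conj_mul', hc]
  · simp [hk]

theorem measurePreserving_comp_perm (σ : Equiv.Perm n) :
    MeasurePreserving (fun x => x ∘ σ) ν ν :=
  funext (fun x => permMatrix_mulVec (R := ℂ) σ (v := x)) ▸ hν _ (permMatrix_mem_unitaryGroup σ)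

theorem integral_norm_pow_four_eq (a b : n) : ∫ x, ‖x a‖ ^ 4 ∂ν = ∫ x, ‖x b‖ ^ 4 ∂ν := by
  simpa using ((hν.measurePreserving_comp_perm (Equiv.swap a b)).integral_comp_self
    (f := fun x => ‖x a‖ ^ 4) (Continuous.aestronglyMeasurable (by fun_prop))).symm

theorem integral_norm_sq_add_norm_sq_mul_im_eq_zero {a b : n} (hab : a ≠ b) :
    ∫ x, (‖x a‖ ^ 2 + ‖x b‖ ^ 2) * (conj (x a) * x b).im ∂ν = 0 :=
  (hν.measurePreserving_update_mul b (c := -1) (by simp)).integral_eq_zero_of_comp_eq_neg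
    (by fun_prop) fun x => by
      simp only [Function.update_of_ne hab, Function.update_self, neg_one_mul, norm_neg, mul_neg,
        Complex.neg_im]

section Finite

variable [IsFiniteMeasure ν] (hsphere : ∀ᵐ x ∂ν, ∑ k, ‖x k‖ ^ 2 = 1)
include hsphere

theorem integral_norm_sum_sq_sq_eq_sum :
    ∫ x, ‖∑ k, x k ^ 2‖ ^ 2 ∂ν = ∑ k, ∫ x, ‖x k‖ ^ 4 ∂ν := by
  have hpt : ∀ x : n → ℂ, ‖∑ k, x k ^ 2‖ ^ 2 =
      ∑ k, (‖x k‖ ^ 4 + (conj (∑ j ∈ Finset.univ.erase k, x j ^ 2) * x k ^ 2).re) := by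
    intro x
    set S := ∑ k, x k ^ 2
    calc ‖S‖ ^ 2 = (conj S * S).re := by rw [Complex.conj_mul']; norm_cast
      _ = ∑ k, (conj S * x k ^ 2).re := by rw [Finset.mul_sum, Complex.re_sum]
      _ = _ := Finset.sum_congr rfl fun k _ => by
        rw [Finset.sum_erase_eq_sub (Finset.mem_univ k), map_sub, sub_mul, Complex.sub_re,
          Complex.conj_mul', norm_pow]
        norm_cast
        ring
  have hodd : ∀ k, ∫ x, (conj (∑ j ∈ Finset.univ.erase k, x j ^ 2) * x k ^ 2).re ∂ν = 0 := by
    intro k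
    have hφ := hν.measurePreserving_update_mul k (c := Complex.I) (by simp)
    refine hφ.integral_eq_zero_of_comp_eq_neg (by fun_prop) fun x => ?_
    rw [Finset.sum_congr rfl fun j hj => by rw [Function.update_of_ne (Finset.ne_of_mem_erase hj)],
      Function.update_self, mul_pow, Complex.I_sq]
    simp
  have hint {f : (n → ℂ) → ℝ} (hf : Continuous f) : Integrable f ν :=
    integrable_of_ae_sum_norm_sq_eq_one hsphere hf
  simp_rw [hpt]
  rw [integral_finsetSum _ fun k _ => hint (by fun_prop)]
  refine Finset.sum_congr rfl fun k _ => ?_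
  rw [integral_add (hint (by fun_prop)) (hint (by fun_prop)), hodd, add_zero]

theorem integral_im_conj_mul_sq {a b : n} (hab : a ≠ b) :
    ∫ x, (conj (x a) * x b).im ^ 2 ∂ν = (∫ x, ‖x a‖ ^ 2 * ‖x b‖ ^ 2 ∂ν) / 2 := by
  have hrot := (hν.measurePreserving_update_mul b (c := Complex.I) (by simp)).integral_comp_self
    (f := fun x => (conj (x a) * x b).im ^ 2) (by fun_prop)
  have hrot_pt : ∀ x : n → ℂ, (conj (Function.update x b (Complex.I * x b) a) *
      Function.update x b (Complex.I * x b) b).im = (conj (x a) * x b).re := fun x => by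
    rw [Function.update_of_ne hab, Function.update_self, mul_left_comm, Complex.I_mul_im]
  have hpyth : ∀ x : n → ℂ,
      ‖x a‖ ^ 2 * ‖x b‖ ^ 2 = (conj (x a) * x b).re ^ 2 + (conj (x a) * x b).im ^ 2 := by
    intro x
    rw [← mul_pow, ← Complex.norm_conj (x a), ← norm_mul, Complex.sq_norm, Complex.normSq_apply]
    ring
  simp only [hrot_pt] at hrot
  rw [funext hpyth, integral_add (integrable_of_ae_sum_norm_sq_eq_one hsphere (by fun_prop))
    (integrable_of_ae_sum_norm_sq_eq_one hsphere (by fun_prop))]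
  linarith

theorem integral_norm_pow_four_eq_two_mul {a b : n} (hab : a ≠ b) :
    ∫ x, ‖x a‖ ^ 4 ∂ν = 2 * ∫ x, ‖x a‖ ^ 2 * ‖x b‖ ^ 2 ∂ν := by
  have hpt : ∀ x : n → ℂ, ‖(sqrtSwapMatrix a b *ᵥ x) a‖ ^ 4 =
      ‖x a‖ ^ 4 / 4 + ‖x b‖ ^ 4 / 4 + ‖x a‖ ^ 2 * ‖x b‖ ^ 2 / 2 +
        (‖x a‖ ^ 2 + ‖x b‖ ^ 2) * (conj (x a) * x b).im + (conj (x a) * x b).im ^ 2 := by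
    intro x
    have hsq : ‖(sqrtSwapMatrix a b *ᵥ x) a‖ ^ 2 =
        (‖x a‖ ^ 2 + ‖x b‖ ^ 2) / 2 + (conj (x a) * x b).im := by
      rw [sqrtSwapMatrix_mulVec_apply_left]
      simp only [Complex.sq_norm, Complex.normSq_apply, Complex.add_re, Complex.mul_re,
        Complex.div_ofNat_re, Complex.one_re, Complex.I_re, add_zero, one_div,
        Complex.div_ofNat_im, Complex.add_im, Complex.one_im, Complex.I_im, zero_add,
        Complex.sub_re, sub_zero, Complex.sub_im, zero_sub, Complex.mul_im, Complex.conj_re,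
        Complex.conj_im, neg_mul]
      ring
    rw [show (4 : ℕ) = 2 * 2 from rfl, pow_mul, hsq]
    ring
  have h := (hν _ (sqrtSwapMatrix_mem_unitaryGroup a b)).integral_comp_self
    (f := fun x => ‖x a‖ ^ 4) (Continuous.aestronglyMeasurable (by fun_prop))
  have hint {f : (n → ℂ) → ℝ} (hf : Continuous f) : Integrable f ν :=
    integrable_of_ae_sum_norm_sq_eq_one hsphere hf
  simp only [hpt] at h
  rw [integral_add (hint (by fun_prop)) (hint (by fun_prop)),
    integral_add (hint (by fun_prop)) (hint (by fun_prop)),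
    integral_add (hint (by fun_prop)) (hint (by fun_prop)),
    integral_add (hint (by fun_prop)) (hint (by fun_prop)),
    integral_div, integral_div, integral_div, hν.integral_norm_pow_four_eq b a,
    hν.integral_norm_sq_add_norm_sq_mul_im_eq_zero hab, hν.integral_im_conj_mul_sq hsphere hab] at h
  linarith

theorem sum_integral_norm_sq_mul_norm_sq (j : n) :
    ∑ k, ∫ x, ‖x j‖ ^ 2 * ‖x k‖ ^ 2 ∂ν = (Fintype.card n + 1) / 2 * ∫ x, ‖x j‖ ^ 4 ∂ν := by
  have hoff : ∀ k ∈ Finset.univ.erase j,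
      ∫ x, ‖x j‖ ^ 2 * ‖x k‖ ^ 2 ∂ν = (∫ x, ‖x j‖ ^ 4 ∂ν) / 2 := fun k hk => by
    rw [hν.integral_norm_pow_four_eq_two_mul hsphere (Finset.ne_of_mem_erase hk).symm]
    ring
  rw [← Finset.add_sum_erase _ _ (Finset.mem_univ j), Finset.sum_congr rfl hoff,
    Finset.sum_erase_eq_sub (Finset.mem_univ j), Finset.sum_const, Finset.card_univ, nsmul_eq_mul]
  simp_rw [← pow_add]
  ring

end Finite

theorem integral_norm_sum_sq_sq [IsProbabilityMeasure ν]
    (hsphere : ∀ᵐ x ∂ν, ∑ k, ‖x k‖ ^ 2 = 1) :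
    ∫ x, ‖∑ k, x k ^ 2‖ ^ 2 ∂ν = 2 / (Fintype.card n + 1) := by
  have h := sum_sum_integral_norm_sq_mul_norm_sq hsphere
  simp_rw [hν.sum_integral_norm_sq_mul_norm_sq hsphere, ← Finset.mul_sum] at h
  rw [hν.integral_norm_sum_sq_sq_eq_sum hsphere, eq_div_iff (by positivity)]
  linarith

end IsUnitarilyInvariant

instance matrixBorelSpace (d : ℕ) : BorelSpace (Matrix (Fin d) (Fin d) ℂ) :=
  inferInstanceAs (BorelSpace (Fin d → Fin d → ℂ))

section UnitaryGroup

variable {d : ℕ} {μ : Measure (unitaryGroup (Fin d) ℂ)}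

theorem measurable_unitaryGroup_column (i : Fin d) :
    Measurable fun (U : unitaryGroup (Fin d) ℂ) k => (U : Matrix (Fin d) (Fin d) ℂ) k i :=
  (continuous_pi fun k => continuous_subtype_val.matrix_elem k i).measurable

theorem ae_map_column_sum_norm_sq_eq_one (μ : Measure (unitaryGroup (Fin d) ℂ)) (i : Fin d) :
    ∀ᵐ x ∂μ.map (fun (U : unitaryGroup (Fin d) ℂ) k => (U : Matrix (Fin d) (Fin d) ℂ) k i),
      ∑ k, ‖x k‖ ^ 2 = 1 :=
  (ae_map_iff (measurable_unitaryGroup_column i).aemeasurable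
    (measurableSet_eq_fun (by fun_prop) measurable_const)).2
      (ae_of_all _ fun U => sum_norm_sq_apply_eq_one U.2 i)

theorem isUnitarilyInvariant_map_column (hinv : ∀ V : unitaryGroup (Fin d) ℂ, μ.map (V * ·) = μ)
    (i : Fin d) : IsUnitarilyInvariant
      (μ.map fun (U : unitaryGroup (Fin d) ℂ) k => (U : Matrix (Fin d) (Fin d) ℂ) k i) := by
  intro V hV
  have hmul : Measurable fun U : unitaryGroup (Fin d) ℂ => ⟨V, hV⟩ * U :=
    (continuous_const.mul continuous_id).measurable
  refine ⟨by fun_prop, ?_⟩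
  rw [Measure.map_map (by fun_prop) (measurable_unitaryGroup_column i)]
  conv_rhs => rw [← hinv ⟨V, hV⟩, Measure.map_map (measurable_unitaryGroup_column i) hmul]
  rfl

theorem integrable_norm_sum_column_sq_sq [IsFiniteMeasure μ] (i : Fin d) :
    Integrable (fun U : unitaryGroup (Fin d) ℂ =>
      ‖∑ k, (U : Matrix (Fin d) (Fin d) ℂ) k i ^ 2‖ ^ 2) μ := by
  have hcont : Continuous fun x : Fin d → ℂ => ‖∑ k, x k ^ 2‖ ^ 2 := by fun_prop
  exact (integrable_map_measure hcont.aestronglyMeasurable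
    (measurable_unitaryGroup_column i).aemeasurable).1
      (integrable_of_ae_sum_norm_sq_eq_one (ae_map_column_sum_norm_sq_eq_one μ i) hcont)

theorem integral_norm_sum_column_sq_sq [IsProbabilityMeasure μ]
    (hinv : ∀ V : unitaryGroup (Fin d) ℂ, μ.map (V * ·) = μ) (i : Fin d) :
    ∫ U, ‖∑ k, (U : Matrix (Fin d) (Fin d) ℂ) k i ^ 2‖ ^ 2 ∂μ = 2 / (d + 1) := by
  have hcol := measurable_unitaryGroup_column i
  have : IsProbabilityMeasure (μ.map _) := Measure.isProbabilityMeasure_map hcol.aemeasurable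
  have h := (isUnitarilyInvariant_map_column hinv i).integral_norm_sum_sq_sq
    (ae_map_column_sum_norm_sq_eq_one μ i)
  rwa [integral_map hcol.aemeasurable (Continuous.aestronglyMeasurable (by fun_prop)),
    Fintype.card_fin] at h

end UnitaryGroup

/-- The average imaginarity `1 - |⟨ψ_U|ψ_U*⟩|²` of `ψ_U = U|0⟩` over the Haar
(i.e. left-invariant probability) measure on the unitary group `U(ℂ^d)` equals
`1 - 2/(d+1)`. -/
theorem average_imaginarity_haar_states (d : ℕ) (hd : 0 < d)
    (μ : Measure (Matrix.unitaryGroup (Fin d) ℂ)) [IsProbabilityMeasure μ]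
    (hinv : ∀ V : Matrix.unitaryGroup (Fin d) ℂ,
      Measure.map (fun U => V * U) μ = μ) :
    ∫ U : Matrix.unitaryGroup (Fin d) ℂ,
        (1 - ‖∑ k, starRingEnd ℂ ((U : Matrix (Fin d) (Fin d) ℂ) k ⟨0, hd⟩) *
            starRingEnd ℂ ((U : Matrix (Fin d) (Fin d) ℂ) k ⟨0, hd⟩)‖ ^ 2) ∂μ
      = 1 - 2 / ((d : ℝ) + 1) := by
  have hconj : ∀ U : unitaryGroup (Fin d) ℂ,
      ‖∑ k, conj ((U : Matrix (Fin d) (Fin d) ℂ) k ⟨0, hd⟩) *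
        conj ((U : Matrix (Fin d) (Fin d) ℂ) k ⟨0, hd⟩)‖ =
      ‖∑ k, (U : Matrix (Fin d) (Fin d) ℂ) k ⟨0, hd⟩ ^ 2‖ := fun U => by
    rw [← Complex.norm_conj, map_sum]
    simp [sq]
  simp_rw [hconj]
  rw [integral_sub (integrable_const 1) (integrable_norm_sum_column_sq_sq _),
    integral_norm_sum_column_sq_sq hinv]
  simp
end

section
/- The average imaginarity of Haar-random unitaries satisfies ∫ I(U) dη(U) = 1 - 2/(d(d+1)), where I(U) = 1 - d^{-2}|tr(Uᵀ U)|² and η is the Haar measure on U(ℂ^d), d ≥ 2. -/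
/-!
Write `tr (Uᵀ U) = ∑ⱼ rⱼ` with `rⱼ = ∑ᵢ Uⱼᵢ² = (U Uᵀ)ⱼⱼ`. Left multiplication by the diagonal unitary
with `i` in position `j` negates `rⱼ` and fixes every other `rₗ`, so `E[rⱼ r̄ₗ] = 0` for `j ≠ l`, while
`E|rⱼ|² = ∑ᵢₖ E[Uⱼᵢ² Ūⱼₖ²]`.

The fourth moments `E[U_ab U_cb Ū_ae Ū_ce]` are determined by left invariance alone. Left
multiplication by a real reflection mixing rows `a` and `c`, averaged over the phases `iᵐ` of row `a`,
shows that `x = E[U_ab² Ū_ae²]` does not depend on `a` and that the moment is `x / 2` for `a ≠ c`;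
orthonormality of the columns `b` and `e` makes the sum of all these moments over `a, c` equal to
`δ_be`. Hence `x = 2 δ_be / (d (d + 1))`, `E|rⱼ|² = 2 / (d + 1)` and `E|tr (Uᵀ U)|² = 2d / (d + 1)`.
-/

open Matrix MeasureTheory

open Finset
open scoped ComplexConjugate

instance {n 𝕜 : Type*} [Fintype n] [DecidableEq n] [RCLike 𝕜] :
    CompactSpace (unitaryGroup n 𝕜) :=
  isCompact_iff_compactSpace.mp <|
    (isCompact_univ_pi fun _ => isCompact_univ_pi fun _ =>
      ProperSpace.isCompact_closedBall (0 : 𝕜) 1).of_isClosed_subset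
      (isClosed_unitary (R := Matrix n n 𝕜)) fun U hU i _ j _ => by
        simpa using entry_norm_bound_of_unitary hU i j

@[fun_prop]
theorem Matrix.UnitaryGroup.continuous_val_apply {n 𝕜 : Type*} [Fintype n] [DecidableEq n]
    [RCLike 𝕜] (i j : n) : Continuous fun U : unitaryGroup n 𝕜 => U.1 i j :=
  (continuous_apply_apply i j).comp continuous_subtype_val

instance (d : ℕ) : BorelSpace (Matrix (Fin d) (Fin d) ℂ) :=
  inferInstanceAs (BorelSpace (Fin d → Fin d → ℂ))

theorem Continuous.integrable_of_compactSpace {X E : Type*} [TopologicalSpace X] [CompactSpace X]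
    [MeasurableSpace X] [OpensMeasurableSpace X] [NormedAddCommGroup E] {μ : Measure X}
    [IsFiniteMeasure μ] {f : X → E} (hf : Continuous f) : Integrable f μ :=
  hf.integrable_of_hasCompactSupport (.of_compactSpace f)

theorem integral_sum_pow_mul_eq_nsmul {G E : Type*} [Group G] [MeasurableSpace G] [MeasurableMul G]
    [NormedAddCommGroup E] [NormedSpace ℝ E] {μ : Measure G} [μ.IsMulLeftInvariant] (g : G) (n : ℕ)
    {f : G → E} (hf : Integrable f μ) :
    ∫ x, ∑ m ∈ range n, f (g ^ m * x) ∂μ = n • ∫ x, f x ∂μ := by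
  rw [integral_finsetSum _ fun m _ => hf.comp_mul_left (g ^ m)]
  simp [integral_mul_left_eq_self]

theorem integral_sum_sum {X E ι κ : Type*} [MeasurableSpace X] [NormedAddCommGroup E]
    [NormedSpace ℝ E] {μ : Measure X} (s : Finset ι) (t : Finset κ) {f : ι → κ → X → E}
    (hf : ∀ i ∈ s, ∀ j ∈ t, Integrable (f i j) μ) :
    ∫ x, ∑ i ∈ s, ∑ j ∈ t, f i j x ∂μ = ∑ i ∈ s, ∑ j ∈ t, ∫ x, f i j x ∂μ := by
  rw [integral_finsetSum _ fun i hi => integrable_finsetSum _ (hf i hi)]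
  exact sum_congr rfl fun i hi => integral_finsetSum _ (hf i hi)

namespace Matrix.UnitaryGroup

variable {n : Type*} [Fintype n] [DecidableEq n]

def phaseAt (a : n) : unitaryGroup n ℂ :=
  ⟨diagonal fun r => if r = a then Complex.I else 1, by
    rw [mem_unitaryGroup_iff, star_eq_conjTranspose, diagonal_conjTranspose, diagonal_mul_diagonal,
      ← diagonal_one]
    congr 1
    ext r
    split_ifs with h <;> simp [h]⟩

theorem sum_apply_mul_conj_apply (U : unitaryGroup n ℂ) (b e : n) :
    ∑ a, U.1 a b * conj (U.1 a e) = if e = b then 1 else 0 := by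
  rw [← Matrix.one_apply, ← star_mul_self U, Matrix.mul_apply]
  simp [mul_comm]

theorem phaseAt_pow_mul_apply (a : n) (m : ℕ) (M : Matrix n n ℂ) (r s : n) :
    ((phaseAt a ^ m).1 * M) r s = (if r = a then Complex.I ^ m else 1) * M r s := by
  simp [phaseAt, diagonal_pow, diagonal_mul, ite_pow]

theorem phaseAt_pow_mul_mul_transpose_apply (a : n) (m : ℕ) (M : Matrix n n ℂ) (r s : n) :
    ((phaseAt a ^ m).1 * M * ((phaseAt a ^ m).1 * M)ᵀ) r s =
      (if r = a then Complex.I ^ m else 1) * (if s = a then Complex.I ^ m else 1) *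
        (M * Mᵀ) r s := by
  rw [Matrix.mul_apply, Matrix.mul_apply (M := M), mul_sum]
  refine sum_congr rfl fun i _ => ?_
  rw [transpose_apply, transpose_apply, phaseAt_pow_mul_apply, phaseAt_pow_mul_apply]
  ring

end Matrix.UnitaryGroup

section Householder

variable {n : Type*} [Fintype n] [DecidableEq n]

def householder (w : n → ℂ) : Matrix n n ℂ := 1 - (2 : ℂ) • vecMulVec w (star w)

theorem householder_mem_unitaryGroup {w : n → ℂ} (hw : star w ⬝ᵥ w = 1) :
    householder w ∈ unitaryGroup n ℂ := by
  have hP : vecMulVec w (star w) * vecMulVec w (star w) = vecMulVec w (star w) := by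
    rw [vecMulVec_mul_vecMulVec, hw, one_smul]
  have hstar : star (householder w) = householder w := by
    simp [householder, star_eq_conjTranspose]
  rw [mem_unitaryGroup_iff', hstar, householder]
  simp only [sub_mul, mul_sub, smul_mul_assoc, mul_smul_comm, hP, one_mul, mul_one]
  module

theorem householder_mul_apply (w : n → ℂ) (M : Matrix n n ℂ) (r s : n) :
    (householder w * M) r s = M r s - 2 * w r * ∑ k, star (w k) * M k s := by
  simp [householder, sub_mul, vecMulVec_mul, vecMulVec_apply, vecMul, dotProduct, mul_assoc]

theorem exists_unitaryGroup_mix_rows {a c : n} (hac : a ≠ c) :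
    ∃ V : unitaryGroup n ℂ, ∀ (M : Matrix n n ℂ) (s : n),
      (V.1 * M) a s = ((7 / 25 : ℝ) : ℂ) * M a s + ((-24 / 25 : ℝ) : ℂ) * M c s ∧
      (V.1 * M) c s = ((-7 / 25 : ℝ) : ℂ) * M c s + ((-24 / 25 : ℝ) : ℂ) * M a s := by
  set w : n → ℂ := Pi.single a (3 / 5) + Pi.single c (4 / 5)
  have hwa : w a = 3 / 5 := by simp [w, hac]
  have hwc : w c = 4 / 5 := by simp [w, hac.symm]
  have hinner : ∀ v : n → ℂ, ∑ k, star (w k) * v k = 3 / 5 * v a + 4 / 5 * v c := by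
    simp [w, Pi.single_apply, add_mul, sum_add_distrib, apply_ite (starRingEnd ℂ), ite_mul,
      map_div₀, Complex.conj_ofNat]
  have hw : star w ⬝ᵥ w = 1 := by
    rw [dotProduct]
    simp only [Pi.star_apply, hinner, hwa, hwc]
    norm_num
  refine ⟨⟨householder w, householder_mem_unitaryGroup hw⟩, fun M s => ?_⟩
  simp only [householder_mul_apply, hinner fun k => M k s, hwa, hwc]
  push_cast
  constructor <;> ring

end Householder

section Moments

variable {d : ℕ} (μ : Measure (unitaryGroup (Fin d) ℂ))

noncomputable def pairMoment (b e a c : Fin d) : ℂ :=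
  ∫ U, U.1 a b * U.1 c b * conj (U.1 a e * U.1 c e) ∂μ

theorem pairMoment_comm (b e a c : Fin d) : pairMoment μ b e a c = pairMoment μ b e c a := by
  unfold pairMoment
  congr 1 with U
  rw [mul_comm (U.1 a b), mul_comm (U.1 a e)]

theorem sum_pairMoment [IsProbabilityMeasure μ] (b e : Fin d) :
    ∑ a, ∑ c, pairMoment μ b e a c = if e = b then 1 else 0 := by
  have hpt : ∀ U : unitaryGroup (Fin d) ℂ,
      ∑ a, ∑ c, U.1 a b * U.1 c b * conj (U.1 a e * U.1 c e) = if e = b then 1 else 0 := by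
    intro U
    calc ∑ a, ∑ c, U.1 a b * U.1 c b * conj (U.1 a e * U.1 c e)
        = (∑ a, U.1 a b * conj (U.1 a e)) * ∑ c, U.1 c b * conj (U.1 c e) := by
          rw [sum_mul_sum]
          refine sum_congr rfl fun a _ => sum_congr rfl fun c _ => ?_
          rw [map_mul]
          ring
      _ = if e = b then 1 else 0 := by
          rw [UnitaryGroup.sum_apply_mul_conj_apply]
          split_ifs <;> simp
  calc ∑ a, ∑ c, pairMoment μ b e a c
      = ∫ U, ∑ a, ∑ c, U.1 a b * U.1 c b * conj (U.1 a e * U.1 c e) ∂μ :=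
        (integral_sum_sum _ _ fun _ _ _ _ => Continuous.integrable_of_compactSpace
          (by fun_prop)).symm
    _ = ∫ _ : unitaryGroup (Fin d) ℂ, (if e = b then 1 else 0 : ℂ) ∂μ := by
        congr 1 with U
        exact hpt U
    _ = if e = b then 1 else 0 := by simp

variable [μ.IsMulLeftInvariant]

theorem pairMoment_self_eq_of_row [IsFiniteMeasure μ] {a c : Fin d} (hac : a ≠ c) (b e : Fin d)
    (V : unitaryGroup (Fin d) ℂ) (p q : ℝ)
    (hV : ∀ (M : Matrix (Fin d) (Fin d) ℂ) (s : Fin d), (V.1 * M) a s = p * M a s + q * M c s) :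
    pairMoment μ b e a a = p ^ 4 * pairMoment μ b e a a
      + 4 * p ^ 2 * q ^ 2 * pairMoment μ b e a c + q ^ 4 * pairMoment μ b e c c := by
  set F : Matrix (Fin d) (Fin d) ℂ → ℂ := fun M => M a b * M a b * conj (M a e * M a e)
  -- averaging over the phases `Iᵐ` of row `a` keeps exactly the terms balanced in row `a`
  have hphase : ∀ U : unitaryGroup (Fin d) ℂ,
      ∑ m ∈ range 4, F (V * (UnitaryGroup.phaseAt a ^ m * U)).1 =
      4 * (p ^ 4 * (U.1 a b * U.1 a b * conj (U.1 a e * U.1 a e))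
        + 4 * p ^ 2 * q ^ 2 * (U.1 a b * U.1 c b * conj (U.1 a e * U.1 c e))
        + q ^ 4 * (U.1 c b * U.1 c b * conj (U.1 c e * U.1 c e))) := by
    intro U
    simp only [F, UnitaryGroup.mul_val, hV, UnitaryGroup.phaseAt_pow_mul_apply, ↓reduceIte,
      if_neg hac.symm, one_mul]
    simp only [sum_range_succ, sum_range_zero, pow_zero, pow_one, Complex.I_sq,
      Complex.I_pow_three, map_mul, map_add, map_neg, map_one, Complex.conj_I, Complex.conj_ofReal]
    ring_nf
    simp only [Complex.I_sq, Complex.I_pow_four]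
    ring_nf
  have key : (4 : ℂ) * pairMoment μ b e a a = 4 * (p ^ 4 * pairMoment μ b e a a
      + 4 * p ^ 2 * q ^ 2 * pairMoment μ b e a c + q ^ 4 * pairMoment μ b e c c) := by
    calc (4 : ℂ) * pairMoment μ b e a a = (4 : ℕ) • ∫ U, F U.1 ∂μ := by
          simp [pairMoment, F]
      _ = (4 : ℕ) • ∫ U, F (V * U).1 ∂μ :=
          congrArg _ (integral_mul_left_eq_self (fun U => F U.1) V).symm
      _ = ∫ U, ∑ m ∈ range 4, F (V * (UnitaryGroup.phaseAt a ^ m * U)).1 ∂μ :=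
          (integral_sum_pow_mul_eq_nsmul _ _ (Continuous.integrable_of_compactSpace
            (by fun_prop))).symm
      _ = _ := by
          simp only [hphase, pairMoment]
          rw [integral_const_mul, integral_add, integral_add, integral_const_mul,
            integral_const_mul, integral_const_mul] <;>
          exact Continuous.integrable_of_compactSpace (by fun_prop)
  exact mul_left_cancel₀ (by norm_num) key

theorem pairMoment_eq_of_ne [IsFiniteMeasure μ] {a c : Fin d} (hac : a ≠ c) (b e : Fin d) :
    pairMoment μ b e c c = pairMoment μ b e a a ∧
      2 * pairMoment μ b e a c = pairMoment μ b e a a := by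
  obtain ⟨V, hV⟩ := exists_unitaryGroup_mix_rows hac
  have ha := pairMoment_self_eq_of_row μ hac b e V _ _ fun M s => (hV M s).1
  have hc := pairMoment_self_eq_of_row μ hac.symm b e V _ _ fun M s => (hV M s).2
  rw [pairMoment_comm μ b e c a] at hc
  -- `ha`, `hc` : `x_a = P x_a + R y + Q x_c`, `x_c = P x_c + R y + Q x_a` with `P = (7/25)⁴`,
  -- `Q = (24/25)⁴`, `R = 4 (7 · 24 / 625)²`; since `1 - P - Q = R / 2`, they force `x_a = x_c = 2 y`
  norm_num at ha hc
  have hca : pairMoment μ b e c c = pairMoment μ b e a a := by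
    linear_combination (390625 / 720000 : ℂ) * (hc - ha)
  exact ⟨hca, by linear_combination (-390625 / 56448 : ℂ) * ha - (288 / 49 : ℂ) * hca⟩

theorem pairMoment_self [IsProbabilityMeasure μ] (b e a : Fin d) :
    pairMoment μ b e a a = if e = b then 2 / ((d : ℂ) * (d + 1)) else 0 := by
  set x := pairMoment μ b e a a
  have hself : ∀ a', pairMoment μ b e a' a' = x := fun a' => by
    rcases eq_or_ne a a' with rfl | h
    · rfl
    · exact (pairMoment_eq_of_ne μ h b e).1
  have hx : ∀ a' c, pairMoment μ b e a' c = x / 2 * (1 + if a' = c then 1 else 0) := by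
    intro a' c
    rcases eq_or_ne a' c with rfl | h
    · rw [hself, if_pos rfl]
      ring
    · rw [if_neg h]
      linear_combination (pairMoment_eq_of_ne μ h b e).2 / 2 + hself a' / 2
  have hsum := sum_pairMoment μ b e
  simp only [hx, mul_add, mul_one, mul_ite, mul_zero, sum_add_distrib, sum_ite_eq, mem_univ,
    if_true, sum_const, card_univ, Fintype.card_fin, nsmul_eq_mul] at hsum
  have hd : (d : ℂ) ≠ 0 := Nat.cast_ne_zero.mpr a.pos.ne'
  have hd1 : (d : ℂ) + 1 ≠ 0 := by exact_mod_cast d.succ_ne_zero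
  have key : x * ((d : ℂ) * (d + 1)) = 2 * if e = b then 1 else 0 := by
    linear_combination 2 * hsum
  split_ifs at key ⊢
  · exact (eq_div_iff (mul_ne_zero hd hd1)).mpr (by simpa using key)
  · simpa [hd, hd1] using key

end Moments

section Trace

variable {d : ℕ} (μ : Measure (unitaryGroup (Fin d) ℂ)) [μ.IsMulLeftInvariant]

theorem integral_mul_transpose_apply_mul_conj_eq_zero [IsFiniteMeasure μ] {j l : Fin d}
    (hjl : j ≠ l) : ∫ U, (U.1 * U.1ᵀ) j j * conj ((U.1 * U.1ᵀ) l l) ∂μ = 0 := by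
  set f : unitaryGroup (Fin d) ℂ → ℂ := fun U => (U.1 * U.1ᵀ) j j * conj ((U.1 * U.1ᵀ) l l)
  have hphase : ∀ U, ∑ m ∈ range 2, f (UnitaryGroup.phaseAt j ^ m * U) = 0 := by
    intro U
    simp only [f, sum_range_succ, sum_range_zero, UnitaryGroup.mul_val,
      UnitaryGroup.phaseAt_pow_mul_mul_transpose_apply, ↓reduceIte, if_neg hjl.symm, pow_zero,
      pow_one, Complex.I_mul_I]
    ring
  have h := integral_sum_pow_mul_eq_nsmul (UnitaryGroup.phaseAt j) 2
    (Continuous.integrable_of_compactSpace (μ := μ) (by fun_prop : Continuous f))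
  simp only [hphase, integral_zero] at h
  simpa [f] using h.symm

theorem integral_mul_transpose_apply_mul_conj_self [IsProbabilityMeasure μ] (j : Fin d) :
    ∫ U, (U.1 * U.1ᵀ) j j * conj ((U.1 * U.1ᵀ) j j) ∂μ = 2 / (d + 1) := by
  have hd : (d : ℂ) ≠ 0 := Nat.cast_ne_zero.mpr j.pos.ne'
  calc ∫ U, (U.1 * U.1ᵀ) j j * conj ((U.1 * U.1ᵀ) j j) ∂μ
      = ∫ U, ∑ i, ∑ k, U.1 j i * U.1 j i * conj (U.1 j k * U.1 j k) ∂μ := by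
        congr 1 with U
        simp only [mul_apply, transpose_apply, map_sum, sum_mul_sum]
    _ = ∑ i, ∑ k, pairMoment μ i k j j :=
        integral_sum_sum _ _ fun _ _ _ _ => Continuous.integrable_of_compactSpace (by fun_prop)
    _ = 2 / (d + 1) := by
        simp only [pairMoment_self, sum_ite_eq', mem_univ, if_true, sum_const, card_univ,
          Fintype.card_fin, nsmul_eq_mul]
        field_simp

theorem integral_norm_trace_transpose_mul_self_sq [IsProbabilityMeasure μ] :
    ∫ U, ‖(U.1ᵀ * U.1).trace‖ ^ 2 ∂μ = 2 * d / (d + 1) := by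
  apply Complex.ofReal_injective
  calc ((∫ U, ‖(U.1ᵀ * U.1).trace‖ ^ 2 ∂μ : ℝ) : ℂ)
      = ∫ U, ∑ j, ∑ l, (U.1 * U.1ᵀ) j j * conj ((U.1 * U.1ᵀ) l l) ∂μ := by
        refine integral_complex_ofReal.symm.trans ?_
        congr 1 with U
        rw [trace_mul_comm, Complex.ofReal_pow, ← Complex.mul_conj', trace, map_sum, sum_mul_sum]
        rfl
    _ = ∑ j, ∑ l, ∫ U, (U.1 * U.1ᵀ) j j * conj ((U.1 * U.1ᵀ) l l) ∂μ :=
        integral_sum_sum _ _ fun _ _ _ _ => Continuous.integrable_of_compactSpace (by fun_prop)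
    _ = ∑ j : Fin d, ∑ l : Fin d, if j = l then (2 / (d + 1) : ℂ) else 0 := by
        refine sum_congr rfl fun j _ => sum_congr rfl fun l _ => ?_
        split_ifs with hjl
        · subst hjl
          exact integral_mul_transpose_apply_mul_conj_self μ j
        · exact integral_mul_transpose_apply_mul_conj_eq_zero μ hjl
    _ = ((2 * d / (d + 1) : ℝ) : ℂ) := by
        simp only [sum_ite_eq, mem_univ, ↓reduceIte, sum_const, card_univ, Fintype.card_fin,
          nsmul_eq_mul]
        push_cast
        ring

end Trace

theorem average_imaginarity_haar_unitaries_general (d : ℕ)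
    (μ : Measure (Matrix.unitaryGroup (Fin d) ℂ)) [IsProbabilityMeasure μ]
    (hinv : ∀ V : Matrix.unitaryGroup (Fin d) ℂ,
      Measure.map (fun U => V * U) μ = μ) :
    ∫ U : Matrix.unitaryGroup (Fin d) ℂ,
        (1 - ((d : ℝ) ^ 2)⁻¹ *
          ‖((U : Matrix (Fin d) (Fin d) ℂ)ᵀ * (U : Matrix (Fin d) (Fin d) ℂ)).trace‖ ^ 2) ∂μ
      = 1 - 2 / ((d : ℝ) * ((d : ℝ) + 1)) := by
  have : μ.IsMulLeftInvariant := ⟨hinv⟩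
  rw [integral_sub (integrable_const 1) (Continuous.integrable_of_compactSpace (by fun_prop)),
    integral_const_mul, integral_norm_trace_transpose_mul_self_sq μ, integral_const, probReal_univ,
    one_smul]
  rcases eq_or_ne (d : ℝ) 0 with hd | hd
  · simp [hd]
  · field_simp

/-- The average imaginarity `I(U) = 1 - d^{-2}|tr(Uᵀ U)|²` over the Haar
(i.e. left-invariant probability) measure on the unitary group `U(ℂ^d)`, `d ≥ 2`,
equals `1 - 2/(d(d+1))`. -/
theorem average_imaginarity_haar_unitaries (d : ℕ) (hd : 2 ≤ d)
    (μ : Measure (Matrix.unitaryGroup (Fin d) ℂ)) [IsProbabilityMeasure μ]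
    (hinv : ∀ V : Matrix.unitaryGroup (Fin d) ℂ,
      Measure.map (fun U => V * U) μ = μ) :
    ∫ U : Matrix.unitaryGroup (Fin d) ℂ,
        (1 - ((d : ℝ) ^ 2)⁻¹ *
          ‖((U : Matrix (Fin d) (Fin d) ℂ)ᵀ * (U : Matrix (Fin d) (Fin d) ℂ)).trace‖ ^ 2) ∂μ
      = 1 - 2 / ((d : ℝ) * ((d : ℝ) + 1)) :=
  average_imaginarity_haar_unitaries_general d μ hinv
end

section
/- For Haar-random pure states, the expected value of Σ_k |c_k|⁴ (the purity of the dephased state) equals 2/(d+1): ∫ Σ_{k=0}^{d-1} |⟨k|U|0⟩|⁴ dη(U) = 2/(d+1). Equivalently, E[C₂(ψ)] = 1 - 2/(d+1) for the Hilbert–Schmidt coherence C₂(ψ) = 1 - Σ_k |c_k|⁴. -/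
open Matrix MeasureTheory

/-!
Write `p_k = ‖U k c‖²`. Left invariance makes the law of the column `fun k => U k c` invariant
under permutations of the rows and under the two-level unitaries `[[a, b], [-conj b, conj a]]`.
Permutations leave two unknowns, `A = 𝔼 p_k²` and `B = 𝔼 p_k p_l` (`k ≠ l`), and `∑ p_k = 1`
gives `d A + d (d - 1) B = 1`. With `x = U i c`, `y = U j c`, each `(x + iᵐ y) / √2` has the law
of `x`, while `∑_{m < 4} ‖x + iᵐ y‖⁴ = 4 ‖x‖⁴ + 16 ‖x‖² ‖y‖² + 4 ‖y‖⁴`; taking expectations,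
`4 A = 2 A + 4 B`, so `A = 2 B` and `𝔼 ∑ p_k² = d A = 2 / (d + 1)`.
-/

open ComplexConjugate

namespace Matrix

variable {n : Type*} [Fintype n] [DecidableEq n]

def twoLevel (i j : n) (a b : ℂ) : Matrix n n ℂ := Matrix.of fun k l =>
  if k = i then (if l = i then a else if l = j then b else 0)
  else if k = j then (if l = i then -conj b else if l = j then conj a else 0)
  else if k = l then 1 else 0

theorem twoLevel_mem_unitaryGroup {i j : n} (hij : i ≠ j) {a b : ℂ}
    (hab : ‖a‖ ^ 2 + ‖b‖ ^ 2 = 1) : twoLevel i j a b ∈ unitaryGroup n ℂ := by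
  have hconj : a * conj a + b * conj b = 1 := by
    simp only [Complex.mul_conj']; exact_mod_cast hab
  rw [mem_unitaryGroup_iff]
  ext k l
  simp only [mul_apply, star_apply, twoLevel, of_apply]
  by_cases hk : k = i ∨ k = j
  · rw [Fintype.sum_eq_add i j hij fun m ⟨hmi, hmj⟩ => by
      rcases hk with rfl | rfl <;> simp [hmi, hmj]]
    rcases hk with rfl | rfl <;> rcases eq_or_ne l k with rfl | hl
    · simp only [↓reduceIte, RCLike.star_def, hij.symm, one_apply_eq]
      linear_combination hconj
    · rcases eq_or_ne l j with rfl | hlj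
      · simp only [↓reduceIte, hij.symm, star_neg, RCLike.star_def, RingHomCompTriple.comp_apply,
          RingHom.id_apply, mul_neg, one_apply_ne hij]
        ring
      · simp [hl, hlj, Ne.symm hl]
    · simp only [hij.symm, ↓reduceIte, star_neg, RCLike.star_def, RingHomCompTriple.comp_apply,
        RingHom.id_apply, mul_neg, neg_mul, neg_neg, one_apply_eq]
      linear_combination hconj
    · rcases eq_or_ne l i with rfl | hli
      · simp only [hij.symm, ↓reduceIte, RCLike.star_def, neg_mul, one_apply_ne hij.symm]
        ring
      · simp [hl, hli, hij.symm, Ne.symm hl]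
  · obtain ⟨hki, hkj⟩ := not_or.mp hk
    rw [Fintype.sum_eq_single k fun m hm => by simp [hki, hkj, Ne.symm hm]]
    rcases eq_or_ne k l with rfl | hl
    · simp [hki, hkj]
    · simp [hki, hkj, hl, Ne.symm hl]

theorem twoLevel_mul_apply_left {i j : n} (hij : i ≠ j) (a b : ℂ) (U : Matrix n n ℂ) (c : n) :
    (twoLevel i j a b * U) i c = a * U i c + b * U j c := by
  rw [mul_apply, Fintype.sum_eq_add i j hij fun m ⟨hmi, hmj⟩ => by simp [twoLevel, hmi, hmj]]
  simp [twoLevel, hij.symm]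

theorem sum_sq_norm_apply_eq_one_of_mem_unitaryGroup {𝕜 : Type*} [RCLike 𝕜] {U : Matrix n n 𝕜}
    (hU : U ∈ unitaryGroup n 𝕜) (j : n) : ∑ k, ‖U k j‖ ^ 2 = 1 := by
  have h := congr_fun₂ (mem_unitaryGroup_iff'.mp hU) j j
  simp only [mul_apply, star_apply, one_apply_eq, RCLike.star_def, RCLike.conj_mul] at h
  exact_mod_cast h

end Matrix

theorem Complex.sum_range_four_norm_add_I_pow_mul_pow_four (x y : ℂ) :
    ∑ k ∈ Finset.range 4, ‖x + I ^ k * y‖ ^ 4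
      = 4 * ‖x‖ ^ 4 + 16 * ‖x‖ ^ 2 * ‖y‖ ^ 2 + 4 * ‖y‖ ^ 4 := by
  have h4 (z : ℂ) : ‖z‖ ^ 4 = (‖z‖ ^ 2) ^ 2 := by ring
  simp only [Finset.sum_range_succ, Finset.sum_range_zero, h4, Complex.sq_norm, normSq_apply]
  simp only [pow_zero, one_mul, add_re, add_im, pow_succ, zero_add, mul_re, I_re, zero_mul, I_im,
    zero_sub, mul_im, I_mul_I, neg_mul, neg_re, neg_im, neg_neg]
  ring

instance inst_s8 (d : ℕ) : BorelSpace (Matrix (Fin d) (Fin d) ℂ) :=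
  inferInstanceAs (BorelSpace (Fin d → Fin d → ℂ))

namespace Matrix.UnitaryGroup

variable {d : ℕ} {μ : Measure (unitaryGroup (Fin d) ℂ)}

theorem continuous_column (c : Fin d) :
    Continuous fun (U : unitaryGroup (Fin d) ℂ) (k : Fin d) => U k c :=
  continuous_pi fun k =>
    (continuous_apply c).comp ((continuous_apply k).comp continuous_subtype_val)

theorem integrable_comp_column [IsFiniteMeasure μ] {F : (Fin d → ℂ) → ℝ} (hF : Continuous F)
    (c : Fin d) : Integrable (fun U : unitaryGroup (Fin d) ℂ => F fun k => U k c) μ := by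
  obtain ⟨C, hC⟩ :=
    (isCompact_closedBall (0 : Fin d → ℂ) 1).exists_bound_of_continuousOn hF.continuousOn
  refine .of_bound (hF.comp (continuous_column c)).aestronglyMeasurable C
    (ae_of_all _ fun U => hC _ ?_)
  simpa [pi_norm_le_iff_of_nonneg] using fun k => entry_norm_bound_of_unitary U.2 k c

theorem sum_sum_integral_sq_norm_mul_sq_norm_entry [IsProbabilityMeasure μ] (c : Fin d) :
    ∑ k, ∑ l, ∫ U, ‖U k c‖ ^ 2 * ‖U l c‖ ^ 2 ∂μ = 1 := by
  have hint (k l : Fin d) :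
      Integrable (fun U : unitaryGroup (Fin d) ℂ => ‖U k c‖ ^ 2 * ‖U l c‖ ^ 2) μ :=
    integrable_comp_column (F := fun v => ‖v k‖ ^ 2 * ‖v l‖ ^ 2) (by fun_prop) c
  calc ∑ k, ∑ l, ∫ U, ‖U k c‖ ^ 2 * ‖U l c‖ ^ 2 ∂μ
      = ∫ U, (∑ k, ‖U k c‖ ^ 2) * ∑ l, ‖U l c‖ ^ 2 ∂μ := by
        simp_rw [Finset.sum_mul_sum]
        rw [integral_finsetSum _ fun k _ => integrable_finsetSum _ fun l _ => hint k l]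
        simp_rw [integral_finsetSum _ fun l _ => hint _ l]
    _ = 1 := by simp [sum_sq_norm_apply_eq_one_of_mem_unitaryGroup (Subtype.prop _)]

variable [μ.IsMulLeftInvariant]

theorem integral_comp_submatrix_perm (σ : Equiv.Perm (Fin d))
    (f : Matrix (Fin d) (Fin d) ℂ → ℝ) :
    ∫ U, f ((U : Matrix (Fin d) (Fin d) ℂ).submatrix σ id) ∂μ = ∫ U, f U ∂μ := by
  simpa [PEquiv.toMatrix_toPEquiv_mul] using
    integral_mul_left_eq_self (μ := μ) (fun U => f U) ⟨_, permMatrix_mem_unitaryGroup σ⟩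

theorem integral_norm_entry_pow_four_eq (i i' c : Fin d) :
    ∫ U, ‖U i c‖ ^ 4 ∂μ = ∫ U, ‖U i' c‖ ^ 4 ∂μ := by
  simpa using integral_comp_submatrix_perm (μ := μ) (Equiv.swap i i') fun M => ‖M i' c‖ ^ 4

theorem integral_sq_norm_mul_sq_norm_entry_eq {i j i' j' : Fin d} (hij : i ≠ j) (hij' : i' ≠ j')
    (c : Fin d) :
    ∫ U, ‖U i c‖ ^ 2 * ‖U j c‖ ^ 2 ∂μ = ∫ U, ‖U i' c‖ ^ 2 * ‖U j' c‖ ^ 2 ∂μ := by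
  obtain ⟨σ, hσi, hσj⟩ := MulAction.is_two_pretransitive_iff.mp
    (Equiv.Perm.isMultiplyPretransitive (Fin d) 2) hij' hij
  rw [Equiv.Perm.smul_def] at hσi hσj
  simpa [hσi, hσj] using
    integral_comp_submatrix_perm (μ := μ) σ fun M => ‖M i' c‖ ^ 2 * ‖M j' c‖ ^ 2

theorem integral_norm_mul_add_mul_pow_four {i j : Fin d} (hij : i ≠ j) {a b : ℂ}
    (hab : ‖a‖ ^ 2 + ‖b‖ ^ 2 = 1) (c : Fin d) :
    ∫ U, ‖a * U i c + b * U j c‖ ^ 4 ∂μ = ∫ U, ‖U i c‖ ^ 4 ∂μ := by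
  simpa [twoLevel_mul_apply_left hij] using integral_mul_left_eq_self (μ := μ)
    (fun U => ‖U i c‖ ^ 4) ⟨_, twoLevel_mem_unitaryGroup hij hab⟩

theorem integral_norm_entry_pow_four_eq_two_mul [IsFiniteMeasure μ] {i j : Fin d} (hij : i ≠ j)
    (c : Fin d) :
    ∫ U, ‖U i c‖ ^ 4 ∂μ = 2 * ∫ U, ‖U i c‖ ^ 2 * ‖U j c‖ ^ 2 ∂μ := by
  set s : ℂ := ↑((√2)⁻¹ : ℝ)
  have hs : ‖s‖ ^ 2 = 1 / 2 := by simp [s, inv_pow]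
  have hrot (k : ℕ) :
      ∫ U, ‖s * U i c + Complex.I ^ k * (s * U j c)‖ ^ 4 ∂μ = ∫ U, ‖U i c‖ ^ 4 ∂μ := by
    simpa only [mul_assoc] using integral_norm_mul_add_mul_pow_four (μ := μ) hij (a := s)
      (b := Complex.I ^ k * s) (by norm_num [hs]) c
  have hpt (U : unitaryGroup (Fin d) ℂ) :
      ∑ k ∈ Finset.range 4, ‖s * U i c + Complex.I ^ k * (s * U j c)‖ ^ 4
        = ‖U i c‖ ^ 4 + 4 * (‖U i c‖ ^ 2 * ‖U j c‖ ^ 2) + ‖U j c‖ ^ 4 := by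
    rw [Complex.sum_range_four_norm_add_I_pow_mul_pow_four, norm_mul, norm_mul]
    have hs4 : ‖s‖ ^ 4 = 1 / 4 := by rw [show ‖s‖ ^ 4 = (‖s‖ ^ 2) ^ 2 by ring, hs]; norm_num
    rw [mul_pow, mul_pow, mul_pow, mul_pow, hs, hs4]
    ring
  have hsum := integral_finsetSum (μ := μ) (Finset.range 4) fun k _ =>
    integrable_comp_column (F := fun v => ‖s * v i + Complex.I ^ k * (s * v j)‖ ^ 4)
      (by fun_prop) c
  simp only [hpt, hrot, Finset.sum_const, Finset.card_range, nsmul_eq_mul, Nat.cast_ofNat] at hsum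
  have h4 (k : Fin d) : Integrable (fun U : unitaryGroup (Fin d) ℂ => ‖U k c‖ ^ 4) μ :=
    integrable_comp_column (F := fun v => ‖v k‖ ^ 4) (by fun_prop) c
  have h22 : Integrable (fun U : unitaryGroup (Fin d) ℂ => 4 * (‖U i c‖ ^ 2 * ‖U j c‖ ^ 2)) μ :=
    integrable_comp_column (F := fun v => 4 * (‖v i‖ ^ 2 * ‖v j‖ ^ 2)) (by fun_prop) c
  rw [integral_add ((h4 i).fun_add h22) (h4 j), integral_add (h4 i) h22, integral_const_mul,
    integral_norm_entry_pow_four_eq j i] at hsum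
  linarith

theorem integral_sum_norm_entry_pow_four [IsProbabilityMeasure μ] (hd : 2 ≤ d) (c : Fin d) :
    ∫ U, ∑ k, ‖U k c‖ ^ 4 ∂μ = 2 / (d + 1) := by
  have : Nontrivial (Fin d) := Fin.nontrivial_iff_two_le.mpr hd
  obtain ⟨j, hj⟩ := exists_ne c
  set a := ∫ U, ‖U c c‖ ^ 4 ∂μ
  set b := ∫ U, ‖U c c‖ ^ 2 * ‖U j c‖ ^ 2 ∂μ
  have hmoment (k l : Fin d) :
      ∫ U, ‖U k c‖ ^ 2 * ‖U l c‖ ^ 2 ∂μ = b + if k = l then a - b else 0 := by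
    split_ifs with hkl
    · subst hkl; simp_rw [← pow_add]; rw [integral_norm_entry_pow_four_eq k c c]; ring
    · rw [integral_sq_norm_mul_sq_norm_entry_eq hkl hj.symm c, add_zero]
  have hnorm : (d : ℝ) * (d * b) + d * (a - b) = 1 := by
    simpa [hmoment, Finset.sum_add_distrib] using
      sum_sum_integral_sq_norm_mul_sq_norm_entry (μ := μ) c
  have hab := integral_norm_entry_pow_four_eq_two_mul (μ := μ) hj.symm c
  rw [integral_finsetSum _ fun k _ =>
    integrable_comp_column (F := fun v => ‖v k‖ ^ 4) (by fun_prop) c]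
  simp_rw [integral_norm_entry_pow_four_eq _ c]
  rw [Finset.sum_const, Finset.card_univ, Fintype.card_fin, nsmul_eq_mul,
    eq_div_iff (by positivity)]
  linear_combination ((d : ℝ) * (d - 1)) * hab + 2 * hnorm

end Matrix.UnitaryGroup

/-- For Haar-random pure states `ψ_U = U|0⟩`, the expected purity of the dephased
state satisfies `∫ Σ_k |⟨k|U|0⟩|⁴ dη(U) = 2/(d+1)`; equivalently the expected
Hilbert–Schmidt coherence `C₂ = 1 - Σ_k |c_k|⁴` equals `1 - 2/(d+1)`. -/
theorem average_coherence_haar_states (d : ℕ) (hd : 2 ≤ d)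
    (μ : Measure (Matrix.unitaryGroup (Fin d) ℂ)) [IsProbabilityMeasure μ]
    (hinv : ∀ V : Matrix.unitaryGroup (Fin d) ℂ,
      Measure.map (fun U => V * U) μ = μ) :
    (∫ U : Matrix.unitaryGroup (Fin d) ℂ,
        (∑ k, ‖(U : Matrix (Fin d) (Fin d) ℂ) k
          (⟨0, by omega⟩ : Fin d)‖ ^ 4) ∂μ = 2 / ((d : ℝ) + 1))
    ∧ (∫ U : Matrix.unitaryGroup (Fin d) ℂ,
        (1 - ∑ k, ‖(U : Matrix (Fin d) (Fin d) ℂ) k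
          (⟨0, by omega⟩ : Fin d)‖ ^ 4) ∂μ = 1 - 2 / ((d : ℝ) + 1)) := by
  have : μ.IsMulLeftInvariant := ⟨hinv⟩
  have hpurity := UnitaryGroup.integral_sum_norm_entry_pow_four (μ := μ) hd ⟨0, by omega⟩
  refine ⟨hpurity, ?_⟩
  rw [integral_sub (integrable_const 1) (UnitaryGroup.integrable_comp_column
    (F := fun v => ∑ k, ‖v k‖ ^ 4) (by fun_prop) _), hpurity]
  simp
end

section
/- The purity of a pure state after single-qubit depolarizing noise with probability p is at most 1 - p + p²/2: for Λ_p(ρ) = (1-p)ρ + (p/2) I₁ ⊗ tr₁(ρ) acting on the first qubit of an n-qubit pure state |ψ⟩⟨ψ|, tr(Λ_p(|ψ⟩⟨ψ|)²) ≤ 1 - p + p²/2. -/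
open Matrix
open scoped Kronecker

/-!
Write `σ = tr₁ ρ` and let `d` be the dimension of the first factor (`d = 2` for a qubit).
Since `tr (ρ (I ⊗ σ)) = tr σ²` and `tr ((I ⊗ σ)²) = d tr σ²`, the purity of `Λ_p(ρ)` is
`(1 - p)² tr ρ² + (2p(1 - p) + p²) / d · tr σ²`. For a pure state `tr ρ² = 1`, and `tr σ² ≤ 1`
because `σ` is the Gram matrix of the slices `s ↦ ψ (s, a)`: Cauchy–Schwarz gives
`|σ_ab|² ≤ σ_aa σ_bb`, hence `tr σ² = ∑ |σ_ab|² ≤ (tr σ)² = 1`.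
-/

namespace Matrix

variable {ι N R : Type*} [Fintype ι]

def partialTraceLeft [AddCommMonoid R] (ρ : Matrix (ι × N) (ι × N) R) : Matrix N N R :=
  of fun a b => ∑ s, ρ (s, a) (s, b)

theorem IsHermitian.partialTraceLeft [AddCommMonoid R] [StarAddMonoid R]
    {ρ : Matrix (ι × N) (ι × N) R} (hρ : ρ.IsHermitian) : ρ.partialTraceLeft.IsHermitian := by
  ext a b
  simp only [conjTranspose_apply, Matrix.partialTraceLeft, of_apply, star_sum, hρ.apply]

variable [Fintype N]

theorem trace_mul_one_kronecker [DecidableEq ι] [CommSemiring R]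
    (ρ : Matrix (ι × N) (ι × N) R) (σ : Matrix N N R) :
    (ρ * (1 ⊗ₖ σ)).trace = (ρ.partialTraceLeft * σ).trace := by
  have hdiag : ∀ s a, (ρ * (1 ⊗ₖ σ) : Matrix (ι × N) (ι × N) R) (s, a) (s, a) =
      ∑ b, ρ (s, a) (s, b) * σ b a := by
    intro s a
    rw [mul_apply, Fintype.sum_prod_type, Finset.sum_eq_single s]
    · simp
    · intro t _ hts
      simp [one_apply_ne hts]
    · simp
  rw [trace, Fintype.sum_prod_type]
  simp only [diag, hdiag, trace, mul_apply, partialTraceLeft, of_apply, Finset.sum_mul]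
  rw [Finset.sum_comm]
  exact Finset.sum_congr rfl fun a _ => Finset.sum_comm

theorem trace_sq_smul_add_smul_one_kronecker_partialTraceLeft [DecidableEq ι] [CommRing R]
    (ρ : Matrix (ι × N) (ι × N) R) (a b : R) :
    let M := a • ρ + b • (1 ⊗ₖ ρ.partialTraceLeft)
    (M * M).trace = a ^ 2 * (ρ * ρ).trace +
      (2 * a * b + b ^ 2 * Fintype.card ι) * (ρ.partialTraceLeft * ρ.partialTraceLeft).trace := by
  intro M
  have hcross : ((1 ⊗ₖ ρ.partialTraceLeft) * ρ).trace =
      (ρ.partialTraceLeft * ρ.partialTraceLeft).trace := by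
    rw [trace_mul_comm, trace_mul_one_kronecker]
  have hsq : ((1 ⊗ₖ ρ.partialTraceLeft) * (1 ⊗ₖ ρ.partialTraceLeft) : Matrix (ι × N) _ R).trace =
      Fintype.card ι * (ρ.partialTraceLeft * ρ.partialTraceLeft).trace := by
    rw [← mul_kronecker_mul, trace_kronecker, one_mul, trace_one]
  simp only [M, add_mul, mul_add, trace_add, smul_mul_smul_comm, trace_smul, smul_eq_mul,
    trace_mul_one_kronecker, hcross, hsq]
  ring

section RCLike

variable {𝕜 m n : Type*} [RCLike 𝕜] [Fintype m] [Fintype n]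

omit [Fintype n] in
theorem isHermitian_vecMulVec_self_star (ψ : n → 𝕜) : (vecMulVec ψ (star ψ)).IsHermitian := by
  rw [IsHermitian, conjTranspose_vecMulVec, star_star]

theorem trace_vecMulVec_self_star_mul_self (ψ : n → 𝕜) :
    (vecMulVec ψ (star ψ) * vecMulVec ψ (star ψ)).trace = (star ψ ⬝ᵥ ψ) ^ 2 := by
  rw [vecMulVec_mul_vecMulVec, trace_vecMulVec, dotProduct_smul, smul_eq_mul, dotProduct_comm, sq]

theorem star_dotProduct_self_eq_sum_norm_sq (ψ : n → 𝕜) :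
    star ψ ⬝ᵥ ψ = ((∑ i, ‖ψ i‖ ^ 2 : ℝ) : 𝕜) := by
  rw [dotProduct_comm, ← EuclideanSpace.inner_toLp_toLp, inner_self_eq_norm_sq_to_K,
    ← RCLike.ofReal_pow, EuclideanSpace.norm_sq_eq]

theorem norm_dotProduct_star_sq_le (v w : n → 𝕜) :
    ‖v ⬝ᵥ star w‖ ^ 2 ≤ (∑ i, ‖v i‖ ^ 2) * ∑ i, ‖w i‖ ^ 2 := by
  rw [← EuclideanSpace.inner_toLp_toLp, ← EuclideanSpace.norm_sq_eq, ← EuclideanSpace.norm_sq_eq,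
    ← mul_pow, mul_comm]
  exact pow_le_pow_left₀ (norm_nonneg _) (norm_inner_le_norm _ _) 2

theorem trace_mul_conjTranspose_self (A : Matrix m n 𝕜) :
    (A * Aᴴ).trace = ((∑ i, ∑ j, ‖A i j‖ ^ 2 : ℝ) : 𝕜) := by
  simp only [trace, diag, mul_apply, conjTranspose_apply, RCLike.star_def, RCLike.mul_conj]
  push_cast
  rfl

theorem re_trace_partialTraceLeft_vecMulVec_sq_le (ψ : m × n → 𝕜) :
    let σ := (vecMulVec ψ (star ψ)).partialTraceLeft
    RCLike.re (σ * σ).trace ≤ (∑ k, ‖ψ k‖ ^ 2) ^ 2 := by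
  intro σ
  set w : n → ℝ := fun a => ∑ s, ‖ψ (s, a)‖ ^ 2
  have hσ : ∀ a b, ‖σ a b‖ ^ 2 ≤ w a * w b := fun a b =>
    norm_dotProduct_star_sq_le (fun s => ψ (s, a)) (fun s => ψ (s, b))
  have hw : ∑ a, w a = ∑ k, ‖ψ k‖ ^ 2 := by
    rw [Fintype.sum_prod_type, Finset.sum_comm]
  calc RCLike.re (σ * σ).trace
      = RCLike.re (σ * σᴴ).trace := by
        rw [((isHermitian_vecMulVec_self_star ψ).partialTraceLeft).eq]
    _ = ∑ a, ∑ b, ‖σ a b‖ ^ 2 := by rw [trace_mul_conjTranspose_self, RCLike.ofReal_re]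
    _ ≤ ∑ a, ∑ b, w a * w b := by gcongr with a _ b _; exact hσ a b
    _ = (∑ k, ‖ψ k‖ ^ 2) ^ 2 := by rw [← hw, sq, Finset.sum_mul_sum]

end RCLike

end Matrix

section Depolarizing

variable {𝕜 ι N : Type*} [RCLike 𝕜] [Fintype ι] [DecidableEq ι] [Fintype N]

noncomputable def depolarizeLeft (p : ℝ) (ρ : Matrix (ι × N) (ι × N) 𝕜) :
    Matrix (ι × N) (ι × N) 𝕜 :=
  ((1 - p : ℝ) : 𝕜) • ρ + ((p / Fintype.card ι : ℝ) : 𝕜) • (1 ⊗ₖ ρ.partialTraceLeft)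

theorem re_trace_depolarizeLeft_vecMulVec_sq_le {p : ℝ} (hp0 : 0 ≤ p) (hp2 : p ≤ 2)
    {ψ : ι × N → 𝕜} (hψ : ∑ k, ‖ψ k‖ ^ 2 = 1) :
    let Λρ := depolarizeLeft p (vecMulVec ψ (star ψ))
    RCLike.re (Λρ * Λρ).trace ≤ (1 - p) ^ 2 + (1 - (1 - p) ^ 2) / Fintype.card ι := by
  have hpurity : (vecMulVec ψ (star ψ) * vecMulVec ψ (star ψ)).trace = 1 := by
    rw [trace_vecMulVec_self_star_mul_self, star_dotProduct_self_eq_sum_norm_sq, hψ]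
    simp
  have hcoef : (2 * ((1 - p : ℝ) : 𝕜) * ((p / Fintype.card ι : ℝ) : 𝕜) +
      ((p / Fintype.card ι : ℝ) : 𝕜) ^ 2 * Fintype.card ι) =
      (((1 - (1 - p) ^ 2) / Fintype.card ι : ℝ) : 𝕜) := by
    rcases eq_or_ne (Fintype.card ι : 𝕜) 0 with hd | hd
    · simp [hd]
    · push_cast
      field_simp
      ring
  have hσ := re_trace_partialTraceLeft_vecMulVec_sq_le ψ
  have hcoef_nonneg : 0 ≤ (1 - (1 - p) ^ 2) / (Fintype.card ι : ℝ) :=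
    div_nonneg (by nlinarith) (Nat.cast_nonneg _)
  rw [hψ, one_pow] at hσ
  simp only [depolarizeLeft]
  rw [trace_sq_smul_add_smul_one_kronecker_partialTraceLeft, hpurity, hcoef, map_add,
    ← RCLike.ofReal_pow, RCLike.re_ofReal_mul, RCLike.re_ofReal_mul, RCLike.one_re, mul_one]
  nlinarith

end Depolarizing

theorem purity_after_depolarizing_general (n : ℕ) (p : ℝ)
    (hp0 : 0 ≤ p) (hp1 : p ≤ 1)
    (ψ : Fin 2 × Fin (2 ^ (n - 1)) → ℂ) (hψ : ∑ k, ‖ψ k‖ ^ 2 = 1) :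
    (let ρ : Matrix (Fin 2 × Fin (2 ^ (n - 1))) (Fin 2 × Fin (2 ^ (n - 1))) ℂ :=
      Matrix.of fun i j => ψ i * starRingEnd ℂ (ψ j);
    let tr₁ρ : Matrix (Fin (2 ^ (n - 1))) (Fin (2 ^ (n - 1))) ℂ :=
      Matrix.of fun a b => ∑ s : Fin 2, ρ (s, a) (s, b);
    let Λρ : Matrix (Fin 2 × Fin (2 ^ (n - 1))) (Fin 2 × Fin (2 ^ (n - 1))) ℂ :=
      ((1 - p : ℝ) : ℂ) • ρ + ((p / 2 : ℝ) : ℂ) • ((1 : Matrix (Fin 2) (Fin 2) ℂ) ⊗ₖ tr₁ρ);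
    ((Λρ * Λρ).trace).re) ≤ 1 - p + p ^ 2 / 2 := by
  have h := re_trace_depolarizeLeft_vecMulVec_sq_le (𝕜 := ℂ) hp0 (by linarith) hψ
  -- `ρ`, `tr₁ρ` and `Λρ` unfold to `vecMulVec ψ (star ψ)`, its `partialTraceLeft` and
  -- `depolarizeLeft p` of it, so `h` matches the goal up to definitional unfolding.
  simp only [depolarizeLeft, Fintype.card_fin, Nat.cast_ofNat] at h
  exact h.trans_eq (by ring)

/-- The purity of an `n`-qubit pure state (viewed as `ℂ² ⊗ ℂ^{2^{n-1}}`) after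
single-qubit depolarizing noise `Λ_p(X) = (1-p)X + (p/2) I₁ ⊗ tr₁(X)` on the
first qubit is at most `1 - p + p²/2`. -/
theorem purity_after_depolarizing (n : ℕ) (hn : 1 ≤ n) (p : ℝ)
    (hp0 : 0 ≤ p) (hp1 : p ≤ 1)
    (ψ : Fin 2 × Fin (2 ^ (n - 1)) → ℂ) (hψ : ∑ k, ‖ψ k‖ ^ 2 = 1) :
    (let ρ : Matrix (Fin 2 × Fin (2 ^ (n - 1))) (Fin 2 × Fin (2 ^ (n - 1))) ℂ :=
      Matrix.of fun i j => ψ i * starRingEnd ℂ (ψ j);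
    let tr₁ρ : Matrix (Fin (2 ^ (n - 1))) (Fin (2 ^ (n - 1))) ℂ :=
      Matrix.of fun a b => ∑ s : Fin 2, ρ (s, a) (s, b);
    let Λρ : Matrix (Fin 2 × Fin (2 ^ (n - 1))) (Fin 2 × Fin (2 ^ (n - 1))) ℂ :=
      ((1 - p : ℝ) : ℂ) • ρ + ((p / 2 : ℝ) : ℂ) • ((1 : Matrix (Fin 2) (Fin 2) ℂ) ⊗ₖ tr₁ρ);
    ((Λρ * Λρ).trace).re) ≤ 1 - p + p ^ 2 / 2 :=
  purity_after_depolarizing_general n p hp0 hp1 ψ hψ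
end

section
/- Rebit purity encodes qubit imaginarity: if |ψ⟩ = Σ_k (a_k + i b_k)|k⟩ with a_k, b_k ∈ ℝ is a unit vector in ℂ^{2^n} and |ψ_R⟩ = Σ_k (a_k |k⟩|R⟩ + b_k |k⟩|I⟩) is the corresponding (n+1)-rebit state, then 1 - |⟨ψ|ψ*⟩|² = 2(1 - tr(tr_{1:n}(|ψ_R⟩⟨ψ_R|)²)), where tr_{1:n} traces out all but the flag qubit. -/
/-!
Write `ψ_k = a_k + i b_k` and `A = Σ a_k²`, `B = Σ b_k²`, `C = Σ a_k b_k`, so `A + B = 1`.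
Then `⟨ψ|ψ*⟩` is the conjugate of `Σ ψ_k² = (A - B) + 2iC`, and the reduced state of the flag
qubit is the real Gram matrix `M = [[A, C], [C, B]]` of the two vectors `a` and `b`.
Both sides of the identity equal `4 det M = 4 (AB - C²)`: the left one because
`(A + B)² - (A - B)² = 4AB`, the right one because `tr M² = (tr M)² - 2 det M` for `2 × 2` matrices.
-/

open Matrix ComplexConjugate Complex

theorem Matrix.trace_mul_self_fin_two {R : Type*} [CommRing R] (M : Matrix (Fin 2) (Fin 2) R) :
    (M * M).trace = M.trace ^ 2 - 2 * M.det := by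
  simp only [trace_fin_two, det_fin_two, mul_apply, Fin.sum_univ_two]
  ring

section Rebit

variable {ι : Type*} [Fintype ι]

theorem sum_ofReal_add_I_mul_sq (a b : ι → ℝ) :
    ∑ k, ((a k : ℂ) + I * b k) ^ 2
      = ((∑ k, a k ^ 2 - ∑ k, b k ^ 2 : ℝ) : ℂ) + ((2 * ∑ k, a k * b k : ℝ) : ℂ) * I := by
  push_cast
  simp only [Finset.mul_sum, Finset.sum_mul, ← Finset.sum_sub_distrib, ← Finset.sum_add_distrib]
  refine Finset.sum_congr rfl fun k _ => ?_
  linear_combination (b k : ℂ) ^ 2 * I_sq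

theorem norm_sum_conj_mul_conj_sq (a b : ι → ℝ) :
    ‖∑ k, conj ((a k : ℂ) + I * b k) * conj ((a k : ℂ) + I * b k)‖ ^ 2
      = (∑ k, a k ^ 2 - ∑ k, b k ^ 2) ^ 2 + (2 * ∑ k, a k * b k) ^ 2 := by
  simp_rw [← map_mul, ← sq]
  rw [← map_sum, norm_conj, sum_ofReal_add_I_mul_sq, Complex.sq_norm, normSq_add_mul_I]

/-- The reduced state `tr_{1:n} |ψ_R⟩⟨ψ_R|` of the flag qubit, with `|R⟩ = |0⟩`, `|I⟩ = |1⟩`. -/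
def flagState (a b : ι → ℝ) : Matrix (Fin 2) (Fin 2) ℂ :=
  let ψR : ι × Fin 2 → ℂ := fun p => if p.2 = 0 then (a p.1 : ℂ) else (b p.1 : ℂ)
  of fun s t => ∑ k, ψR (k, s) * conj (ψR (k, t))

theorem flagState_eq (a b : ι → ℝ) :
    flagState a b = !![((∑ k, a k ^ 2 : ℝ) : ℂ), ((∑ k, a k * b k : ℝ) : ℂ);
                       ((∑ k, a k * b k : ℝ) : ℂ), ((∑ k, b k ^ 2 : ℝ) : ℂ)] := by
  ext s t
  fin_cases s <;> fin_cases t <;> simp [flagState, conj_ofReal, sq, mul_comm]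

theorem re_trace_flagState_mul_self (a b : ι → ℝ) :
    ((flagState a b * flagState a b).trace).re
      = (∑ k, a k ^ 2 + ∑ k, b k ^ 2) ^ 2
        - 2 * ((∑ k, a k ^ 2) * ∑ k, b k ^ 2 - (∑ k, a k * b k) ^ 2) := by
  rw [trace_mul_self_fin_two, flagState_eq, trace_fin_two_of, det_fin_two_of, ← sq]
  norm_cast

end Rebit

theorem rebit_purity_encodes_imaginarity_general (n : ℕ)
    (a b : Fin (2 ^ n) → ℝ)
    (hnorm : ∑ k, (a k ^ 2 + b k ^ 2) = 1) :
    (let ψ : Fin (2 ^ n) → ℂ := fun k => (a k : ℂ) + Complex.I * (b k : ℂ);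
    let ψR : Fin (2 ^ n) × Fin 2 → ℂ := fun p => if p.2 = 0 then (a p.1 : ℂ) else (b p.1 : ℂ);
    -- reduced state of the flag qubit, tracing out the first n qubits
    let M : Matrix (Fin 2) (Fin 2) ℂ :=
      Matrix.of fun s t => ∑ k, ψR (k, s) * starRingEnd ℂ (ψR (k, t));
    1 - ‖∑ k, starRingEnd ℂ (ψ k) * starRingEnd ℂ (ψ k)‖ ^ 2
      = 2 * (1 - ((M * M).trace).re)) := by
  show 1 - _ = 2 * (1 - ((flagState a b * flagState a b).trace).re)
  rw [norm_sum_conj_mul_conj_sq, re_trace_flagState_mul_self]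
  rw [Finset.sum_add_distrib] at hnorm
  linear_combination (∑ k, a k ^ 2 + ∑ k, b k ^ 2 + 1) * hnorm

/-- Rebit purity encodes qubit imaginarity: for `ψ = Σ_k (a_k + i b_k)|k⟩` a unit
vector and the rebit state `ψ_R = Σ_k (a_k |k⟩|R⟩ + b_k |k⟩|I⟩)`,
`1 - |⟨ψ|ψ*⟩|² = 2(1 - tr(tr_{1:n}(|ψ_R⟩⟨ψ_R|)²))`. -/
theorem rebit_purity_encodes_imaginarity (n : ℕ) (hn : 1 ≤ n)
    (a b : Fin (2 ^ n) → ℝ)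
    (hnorm : ∑ k, (a k ^ 2 + b k ^ 2) = 1) :
    (let ψ : Fin (2 ^ n) → ℂ := fun k => (a k : ℂ) + Complex.I * (b k : ℂ);
    let ψR : Fin (2 ^ n) × Fin 2 → ℂ := fun p => if p.2 = 0 then (a p.1 : ℂ) else (b p.1 : ℂ);
    -- reduced state of the flag qubit, tracing out the first n qubits
    let M : Matrix (Fin 2) (Fin 2) ℂ :=
      Matrix.of fun s t => ∑ k, ψR (k, s) * starRingEnd ℂ (ψR (k, t));
    1 - ‖∑ k, starRingEnd ℂ (ψ k) * starRingEnd ℂ (ψ k)‖ ^ 2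
      = 2 * (1 - ((M * M).trace).re)) :=
  rebit_purity_encodes_imaginarity_general n a b hnorm
end

section
/- For a rebit encoding of a qubit state, the reduced flag-qubit purity satisfies tr(tr_{1:n}(|ψ_R⟩⟨ψ_R|)²) = ½(|⟨ψ*|ψ⟩|² + 1). -/
/-!
With `A = ‖a‖²`, `B = ‖b‖²` and `C = ⟨a, b⟩`, the reduced flag state is the real Gram matrix
`[[A, C], [C, B]]`, whose purity is `A² + 2C² + B²`. On the other hand `⟨ψ*|ψ⟩ = ∑ ψₖ² = (A - B) + 2Ci`,
and `A² + 2C² + B² = ½((A - B)² + (2C)² + (A + B)²)` with `A + B = ‖ψ‖² = 1`.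
-/

open Matrix Complex

section
variable {ι : Type*} [Fintype ι]

theorem partialTrace_rebit_eq_gram (a b : ι → ℝ) :
    (Matrix.of fun s t : Fin 2 => ∑ k,
        (if s = 0 then (a k : ℂ) else b k) * starRingEnd ℂ (if t = 0 then (a k : ℂ) else b k)) =
      !![((a ⬝ᵥ a : ℝ) : ℂ), ((a ⬝ᵥ b : ℝ) : ℂ); ((a ⬝ᵥ b : ℝ) : ℂ), ((b ⬝ᵥ b : ℝ) : ℂ)] := by
  ext s t
  fin_cases s <;> fin_cases t <;>
    simp [dotProduct, conj_ofReal, mul_comm]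

theorem trace_mul_self_symm_fin_two {R : Type*} [CommRing R] (x y z : R) :
    (!![x, y; y, z] * !![x, y; y, z]).trace = x ^ 2 + 2 * y ^ 2 + z ^ 2 := by
  rw [mul_fin_two, trace_fin_two_of]
  ring

theorem sum_mul_self_ofReal_add_I_mul (a b : ι → ℝ) :
    ∑ k, ((a k : ℂ) + I * b k) * ((a k : ℂ) + I * b k) =
      ((a ⬝ᵥ a - b ⬝ᵥ b : ℝ) : ℂ) + ((2 * (a ⬝ᵥ b) : ℝ) : ℂ) * I := by
  simp only [dotProduct, ofReal_sub, ofReal_mul, ofReal_sum, ofReal_ofNat, Finset.mul_sum,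
    Finset.sum_mul, ← Finset.sum_sub_distrib, ← Finset.sum_add_distrib]
  refine Finset.sum_congr rfl fun k _ => ?_
  linear_combination (b k : ℂ) ^ 2 * I_sq

theorem norm_sum_mul_self_ofReal_add_I_mul_sq (a b : ι → ℝ) :
    ‖∑ k, ((a k : ℂ) + I * b k) * ((a k : ℂ) + I * b k)‖ ^ 2 =
      (a ⬝ᵥ a - b ⬝ᵥ b) ^ 2 + (2 * (a ⬝ᵥ b)) ^ 2 := by
  rw [sum_mul_self_ofReal_add_I_mul, Complex.sq_norm, normSq_add_mul_I]

end

theorem rebit_flag_purity_general (n : ℕ)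
    (a b : Fin (2 ^ n) → ℝ)
    (hnorm : ∑ k, (a k ^ 2 + b k ^ 2) = 1) :
    (let ψ : Fin (2 ^ n) → ℂ := fun k => (a k : ℂ) + Complex.I * (b k : ℂ);
    let ψR : Fin (2 ^ n) × Fin 2 → ℂ := fun p => if p.2 = 0 then (a p.1 : ℂ) else (b p.1 : ℂ);
    let M : Matrix (Fin 2) (Fin 2) ℂ :=
      Matrix.of fun s t => ∑ k, ψR (k, s) * starRingEnd ℂ (ψR (k, t));
    (M * M).trace = (((‖∑ k, ψ k * ψ k‖ ^ 2 + 1) / 2 : ℝ) : ℂ)) := by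
  intro ψ ψR M
  have hM : M = !![((a ⬝ᵥ a : ℝ) : ℂ), ((a ⬝ᵥ b : ℝ) : ℂ); ((a ⬝ᵥ b : ℝ) : ℂ), ((b ⬝ᵥ b : ℝ) : ℂ)] :=
    partialTrace_rebit_eq_gram a b
  have hsum : a ⬝ᵥ a + b ⬝ᵥ b = 1 := by
    simpa only [dotProduct, sq, Finset.sum_add_distrib] using hnorm
  have hpurity : (a ⬝ᵥ a) ^ 2 + 2 * (a ⬝ᵥ b) ^ 2 + (b ⬝ᵥ b) ^ 2 =
      ((a ⬝ᵥ a - b ⬝ᵥ b) ^ 2 + (2 * (a ⬝ᵥ b)) ^ 2 + 1) / 2 := by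
    linear_combination (a ⬝ᵥ a + b ⬝ᵥ b + 1) / 2 * hsum
  rw [hM, trace_mul_self_symm_fin_two, norm_sum_mul_self_ofReal_add_I_mul_sq]
  exact_mod_cast hpurity

/-- For the rebit encoding of a qubit state, the purity of the reduced flag-qubit
state satisfies `tr(tr_{1:n}(|ψ_R⟩⟨ψ_R|)²) = ½(|⟨ψ*|ψ⟩|² + 1)`. -/
theorem rebit_flag_purity (n : ℕ) (hn : 1 ≤ n)
    (a b : Fin (2 ^ n) → ℝ)
    (hnorm : ∑ k, (a k ^ 2 + b k ^ 2) = 1) :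
    (let ψ : Fin (2 ^ n) → ℂ := fun k => (a k : ℂ) + Complex.I * (b k : ℂ);
    let ψR : Fin (2 ^ n) × Fin 2 → ℂ := fun p => if p.2 = 0 then (a p.1 : ℂ) else (b p.1 : ℂ);
    let M : Matrix (Fin 2) (Fin 2) ℂ :=
      Matrix.of fun s t => ∑ k, ψR (k, s) * starRingEnd ℂ (ψR (k, t));
    (M * M).trace = (((‖∑ k, ψ k * ψ k‖ ^ 2 + 1) / 2 : ℝ) : ℂ)) :=
  rebit_flag_purity_general n a b hnorm
end
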